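/- arXiv:1602.00597 — 8 statements merged into one kernel-verified Lean document; each statement's English description precedes it below -/
import Mathlib

section
/- Let k be a commutative ring with Jacobson radical 𝔍, and let f₁,…,fₙ ∈ k[X₁,…,Xₙ] have a simple zero at a = (a₁,…,aₙ) ∈ kⁿ: f_i(a) = 0 for all i, and the Jacobian determinant det(∂f_j/∂X_i)(a) is a unit of k. Let L = k[X₁,…,Xₙ]/⟨f₁,…,fₙ⟩ with x_i the image of X_i, and let S = 1 + ⟨x₁−a₁,…,xₙ−aₙ⟩L. Then: (1) the natural ring map k → L_S (localization of L at the multiplicative set S) is an isomorphism; (2) there exists an idempotent e ∈ S with e·x_i = e·a_i for all i, and L_S ≅ L[1/e]; (3) if b = (b₁,…,bₙ) ∈ kⁿ satisfies f_i(b) = 0 for all i and b_i − a_i ∈ 𝔍 for all i, then b = a. -/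
/-- The multiplicative monoid `1 + J` for an ideal `J` of a commutative ring. -/
def oneAddIdeal {L : Type*} [CommRing L] (J : Ideal L) : Submonoid L where
  carrier := {u | ∃ m ∈ J, u = 1 + m}
  one_mem' := ⟨0, J.zero_mem, by ring⟩
  mul_mem' := by
    rintro u v ⟨mu, hmu, rfl⟩ ⟨mv, hmv, rfl⟩
    exact ⟨mu + mv + mu * mv,
      J.add_mem (J.add_mem hmu hmv) (Ideal.mul_mem_right _ _ hmu), by ring⟩

open MvPolynomial

lemma aux_sub_C_mem {k : Type*} [CommRing k] {n : ℕ} (a : Fin n → k)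
    (p : MvPolynomial (Fin n) k) :
    p - C (eval a p) ∈ Ideal.span (Set.range fun i => X i - C (a i)) := by
  induction p using MvPolynomial.induction_on with
  | C c => simp
  | add p q hp hq =>
      have : p + q - C (eval a (p + q)) = (p - C (eval a p)) + (q - C (eval a q)) := by
        simp [map_add]; ring
      rw [this]; exact Ideal.add_mem _ hp hq
  | mul_X p i hp =>
      have : p * X i - C (eval a (p * X i))
          = (p - C (eval a p)) * X i + C (eval a p) * (X i - C (a i)) := by
        simp [map_mul]; ring
      rw [this]
      exact Ideal.add_mem _ (Ideal.mul_mem_right _ _ hp)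
        (Ideal.mul_mem_left _ _ (Ideal.subset_span ⟨i, rfl⟩))

lemma aux_taylor {k : Type*} [CommRing k] {n : ℕ} (a : Fin n → k)
    (p : MvPolynomial (Fin n) k) :
    p - (C (eval a p) + ∑ i, C (eval a (pderiv i p)) * (X i - C (a i))) ∈
      (Ideal.span (Set.range fun i => X i - C (a i))) ^ 2 := by
  set I := Ideal.span (Set.range fun i => (X i : MvPolynomial (Fin n) k) - C (a i)) with hI
  induction p using MvPolynomial.induction_on with
  | C c => simp
  | add p q hp hq =>
      have : p + q - (C (eval a (p + q)) + ∑ i, C (eval a (pderiv i (p + q))) * (X i - C (a i)))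
          = (p - (C (eval a p) + ∑ i, C (eval a (pderiv i p)) * (X i - C (a i))))
          + (q - (C (eval a q) + ∑ i, C (eval a (pderiv i q)) * (X i - C (a i)))) := by
        simp only [map_add, C_add, add_mul, Finset.sum_add_distrib]; ring
      rw [this]; exact Ideal.add_mem _ hp hq
  | mul_X p i hp =>
      have key : ∀ j, C (eval a (pderiv j (p * X i))) * (X j - C (a j))
          = C (a i) * (C (eval a (pderiv j p)) * (X j - C (a j)))
            + (if j = i then C (eval a p) * (X i - C (a i)) else 0) := by
        intro j
        by_cases h : j = i <;> simp [h, pderiv_mul, pderiv_X, Pi.single_apply, map_mul, map_add] <;> ring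
      have hsum : ∑ j, C (eval a (pderiv j (p * X i))) * (X j - C (a j))
          = C (a i) * (∑ j, C (eval a (pderiv j p)) * (X j - C (a j)))
            + C (eval a p) * (X i - C (a i)) := by
        rw [Finset.sum_congr rfl fun j _ => key j, Finset.sum_add_distrib, Finset.mul_sum]
        simp
      have hid : p * X i - (C (eval a (p * X i)) + ∑ j, C (eval a (pderiv j (p * X i))) * (X j - C (a j)))
          = (X i - C (a i)) * (p - C (eval a p))
            + C (a i) * (p - (C (eval a p) + ∑ j, C (eval a (pderiv j p)) * (X j - C (a j)))) := by
        rw [hsum]; simp [map_mul]; ring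
      rw [hid]
      refine Ideal.add_mem _ ?_ (Ideal.mul_mem_left _ _ hp)
      rw [sq]
      exact Ideal.mul_mem_mul (Ideal.subset_span ⟨i, rfl⟩) (aux_sub_C_mem a p)

lemma aux_linalg {k R : Type*} [CommRing k] [CommRing R] {n : ℕ}
    (ψ : k →+* R) (c : Matrix (Fin n) (Fin n) k) (hc : IsUnit c.det)
    (v : Fin n → R) (K : Ideal R)
    (h : ∀ j, (∑ i, ψ (c i j) * v i) ∈ K) : ∀ i, v i ∈ K := by
  intro i
  set N : Matrix (Fin n) (Fin n) R := c.map ψ with hN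
  have hNdet : IsUnit N.det := by
    rw [hN, show c.map ψ = ψ.mapMatrix c from rfl, ← RingHom.map_det]; exact hc.map ψ
  have hv : v = Matrix.vecMul (Matrix.vecMul v N) N⁻¹ := by
    rw [Matrix.vecMul_vecMul, Matrix.mul_nonsing_inv _ hNdet, Matrix.vecMul_one]
  have : v i = ∑ j, (Matrix.vecMul v N) j * N⁻¹ j i := by
    conv_lhs => rw [hv]
    rfl
  rw [this]
  refine Ideal.sum_mem _ fun j _ => Ideal.mul_mem_right _ _ ?_
  have : Matrix.vecMul v N j = ∑ i, ψ (c i j) * v i := by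
    simp [Matrix.vecMul, dotProduct, hN, Matrix.map_apply, mul_comm]
  rw [this]; exact h j

set_option synthInstance.maxHeartbeats 1000000 in
set_option maxHeartbeats 1000000 in
/-- **Isolation of a simple zero.** Let `f₁,…,fₙ ∈ k[X₁,…,Xₙ]` have a simple zero
at `a ∈ kⁿ` (i.e. `f_i(a) = 0` and the Jacobian determinant at `a` is a unit). With
`L = k[X]/⟨f⟩`, `x_i` the image of `X_i`, and `S = 1 + ⟨x₁−a₁,…,xₙ−aₙ⟩L`, we have:
(1) the natural map `k → L_S` is an isomorphism; (2) there is an idempotent `e ∈ S`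
with `e·x_i = e·a_i` and `L_S ≅ L[1/e]`; (3) `a` is the unique zero of the system
congruent to `a` modulo the Jacobson radical of `k`. -/
theorem simple_zero_isolation {k : Type*} [CommRing k] {n : ℕ}
    (f : Fin n → MvPolynomial (Fin n) k) (a : Fin n → k)
    (hz : ∀ i, MvPolynomial.eval a (f i) = 0)
    (hJ : IsUnit (Matrix.det (Matrix.of fun i j : Fin n =>
      MvPolynomial.eval a (MvPolynomial.pderiv i (f j))))) :
    let L := MvPolynomial (Fin n) k ⧸ Ideal.span (Set.range f)
    let x : Fin n → L := fun i =>
      Ideal.Quotient.mk (Ideal.span (Set.range f)) (MvPolynomial.X i)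
    let S : Submonoid L :=
      oneAddIdeal (Ideal.span (Set.range fun i => x i - algebraMap k L (a i)))
    Function.Bijective ((algebraMap L (Localization S)).comp (algebraMap k L)) ∧
    (∃ e ∈ S, IsIdempotentElem e ∧ (∀ i, e * x i = e * algebraMap k L (a i)) ∧
      IsLocalization.Away e (Localization S)) ∧
    (∀ b : Fin n → k, (∀ i, MvPolynomial.eval b (f i) = 0) →
      (∀ i, b i - a i ∈ (⊥ : Ideal k).jacobson) → b = a) := by
  intro L x S
  classical
  set Ff : Ideal (MvPolynomial (Fin n) k) := Ideal.span (Set.range f) with hFf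
  set mk : MvPolynomial (Fin n) k →+* L := Ideal.Quotient.mk Ff with hmk
  set J : Ideal L := Ideal.span (Set.range fun i => x i - algebraMap k L (a i)) with hJdef
  set I : Ideal (MvPolynomial (Fin n) k) :=
    Ideal.span (Set.range fun i => X i - C (a i)) with hIdef
  have hmkgen : ∀ i, mk (X i - C (a i)) = x i - algebraMap k L (a i) := fun i => by
    simp only [map_sub]; rfl
  have hmapI : Ideal.map mk I = J := by
    rw [hIdef, Ideal.map_span, ← Set.range_comp, hJdef]
    congr 1
  -- Taylor: each Jacobian combination of generators lies in J^2
  have htay : ∀ j, (∑ i, algebraMap k L (eval a (pderiv i (f j)))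
      * (x i - algebraMap k L (a i))) ∈ J ^ 2 := by
    intro j
    have h1 := aux_taylor a (f j)
    have h2 : mk (f j - (C (eval a (f j)) + ∑ i, C (eval a (pderiv i (f j))) * (X i - C (a i)))) ∈ J ^ 2 := by
      rw [← hmapI, sq, ← Ideal.map_mul, ← sq]
      exact Ideal.mem_map_of_mem mk h1
    have h3 : mk (f j) = 0 := Ideal.Quotient.eq_zero_iff_mem.mpr (Ideal.subset_span ⟨j, rfl⟩)
    have h4 : mk (f j - (C (eval a (f j)) + ∑ i, C (eval a (pderiv i (f j))) * (X i - C (a i))))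
        = -(∑ i, algebraMap k L (eval a (pderiv i (f j))) * (x i - algebraMap k L (a i))) := by
      have hCk : ∀ c : k, mk (C c) = algebraMap k L c := fun c => rfl
      rw [map_sub, h3, map_add, map_sum, hz j, C_0, map_zero]
      simp only [map_mul, hmkgen, hCk]
      ring
    rw [h4] at h2
    simpa using (neg_mem_iff.mp h2)
  have hJJ2 : J ≤ J ^ 2 := by
    rw [hJdef, Ideal.span_le]
    rintro _ ⟨i, rfl⟩
    exact aux_linalg (algebraMap k L) (Matrix.of fun i j : Fin n => eval a (pderiv i (f j))) hJ
      (fun i => x i - algebraMap k L (a i)) (J ^ 2) htay i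
  -- Nakayama idempotent
  have hsm : J • J = J ^ 2 := by rw [smul_eq_mul, sq]
  obtain ⟨e, he1, he2⟩ := Submodule.exists_sub_one_mem_and_smul_eq_zero_of_fg_of_le_smul J J
    (Submodule.fg_span (Set.finite_range _)) (hsm ▸ hJJ2)
  have heS : e ∈ S := ⟨e - 1, he1, by ring⟩
  have heid : IsIdempotentElem e := by
    have := he2 (e - 1) he1
    rw [smul_eq_mul] at this
    show e * e = e
    linear_combination this
  have hekill : ∀ m ∈ J, e * m = 0 := fun m hm => he2 m hm
  have hex : ∀ i, e * x i = e * algebraMap k L (a i) := by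
    intro i
    have := hekill _ (Ideal.subset_span ⟨i, rfl⟩ : x i - algebraMap k L (a i) ∈ J)
    linear_combination this
  -- facts in the localization
  have hJ0 : ∀ m ∈ J, algebraMap L (Localization S) m = 0 := fun m hm =>
    (IsLocalization.map_eq_zero_iff S _ m).mpr ⟨⟨e, heS⟩, hekill m hm⟩
  have hS1 : ∀ s ∈ S, algebraMap L (Localization S) s = 1 := by
    rintro _ ⟨m, hm, rfl⟩
    rw [map_add, map_one, hJ0 m hm, add_zero]
  have hxa : ∀ i, algebraMap L (Localization S) (x i)
      = algebraMap L (Localization S) (algebraMap k L (a i)) := by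
    intro i
    have := hJ0 _ (Ideal.subset_span ⟨i, rfl⟩ : x i - algebraMap k L (a i) ∈ J)
    rw [map_sub] at this
    exact sub_eq_zero.mp this
  -- part 1: bijectivity
  have hker : Ff ≤ RingHom.ker (eval a : MvPolynomial (Fin n) k →+* k) := by
    rw [hFf, Ideal.span_le]
    rintro _ ⟨i, rfl⟩
    exact hz i
  set phi : L →+* k := Ideal.Quotient.lift Ff (eval a) (fun p hp => hker hp) with hphi
  have hphix : ∀ i, phi (x i) = a i := fun i => by
    show eval a (X i) = a i
    simp
  have hphik : ∀ c : k, phi (algebraMap k L c) = c := fun c => by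
    show eval a (C c) = c
    simp
  have hphiJ : ∀ m ∈ J, phi m = 0 := by
    intro m hm
    refine (Ideal.span_le.mpr ?_ : J ≤ RingHom.ker phi) hm
    rintro _ ⟨i, rfl⟩
    show phi _ = 0
    rw [map_sub, hphix, hphik, sub_self]
  have hphiS : ∀ s : S, IsUnit (phi s) := by
    rintro ⟨_, m, hm, rfl⟩
    rw [map_add, map_one, hphiJ m hm, add_zero]
    exact isUnit_one
  set psi : Localization S →+* k := IsLocalization.lift hphiS with hpsi
  have hleft : Function.LeftInverse psi ((algebraMap L (Localization S)).comp (algebraMap k L)) := by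
    intro c
    rw [RingHom.comp_apply, hpsi, IsLocalization.lift_eq, hphik]
  have hinj : Function.Injective ((algebraMap L (Localization S)).comp (algebraMap k L)) :=
    hleft.injective
  have hrange : ∀ p : MvPolynomial (Fin n) k,
      algebraMap L (Localization S) (mk p)
        = ((algebraMap L (Localization S)).comp (algebraMap k L)) (eval a p) := by
    have : (algebraMap L (Localization S)).comp mk
        = (((algebraMap L (Localization S)).comp (algebraMap k L)).comp (eval a : MvPolynomial (Fin n) k →+* k)) := by
      apply MvPolynomial.ringHom_ext
      · intro r
        simp only [RingHom.comp_apply]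
        rw [show mk (C r) = algebraMap k L r from rfl, show eval a (C r) = r by simp]
      · intro i
        simp only [RingHom.comp_apply]
        rw [show eval a (X i) = a i by simp]
        exact hxa i
    intro p
    exact congrFun (congrArg (fun g : _ →+* _ => ⇑g) this) p
  have hsurj : Function.Surjective ((algebraMap L (Localization S)).comp (algebraMap k L)) := by
    intro z
    obtain ⟨l, s, rfl⟩ := IsLocalization.exists_mk'_eq S z
    have hmk' : IsLocalization.mk' (Localization S) l s = algebraMap L (Localization S) l := by
      have := IsLocalization.mk'_spec (Localization S) l s
      rwa [hS1 s s.2, mul_one] at this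
    obtain ⟨p, rfl⟩ := Ideal.Quotient.mk_surjective l
    exact ⟨eval a p, by rw [hmk', show Ideal.Quotient.mk Ff p = mk p from rfl, hrange]⟩
  refine ⟨⟨hinj, hsurj⟩, ?_, ?_⟩
  · -- part 2
    refine ⟨e, heS, heid, hex, ?_⟩
    constructor
    constructor
    · rintro ⟨y, m, rfl⟩
      rw [map_pow]
      exact (IsLocalization.map_units (Localization S) ⟨e, heS⟩).pow m
    · intro z
      obtain ⟨l, s, rfl⟩ := IsLocalization.exists_mk'_eq S z
      refine ⟨(l * e, ⟨e, 1, pow_one e⟩), ?_⟩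
      have hmk' : IsLocalization.mk' (Localization S) l s = algebraMap L (Localization S) l := by
        have := IsLocalization.mk'_spec (Localization S) l s
        rwa [hS1 s s.2, mul_one] at this
      rw [hmk']
      simp [map_mul]
    · intro p q h
      obtain ⟨c, hc⟩ := (IsLocalization.eq_iff_exists S _).mp h
      refine ⟨⟨e, 1, pow_one e⟩, ?_⟩
      obtain ⟨_, m, hm, rfl⟩ := c
      have hem : e * m = 0 := hekill m hm
      show e * p = e * q
      have h1 : e * ((1 + m) * p) = e * ((1 + m) * q) := by rw [hc]
      calc e * p = e * ((1 + m) * p) := by linear_combination (-p) * hem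
        _ = e * ((1 + m) * q) := h1
        _ = e * q := by linear_combination q * hem
  · -- part 3
    intro b hb hbj
    set d : Fin n → k := fun i => b i - a i with hd
    set B : Ideal k := Ideal.span (Set.range d) with hB
    have htayb : ∀ j, (∑ i, eval a (pderiv i (f j)) * d i) ∈ B ^ 2 := by
      intro j
      have h1 := aux_taylor a (f j)
      have h2 : eval b (f j - (C (eval a (f j)) + ∑ i, C (eval a (pderiv i (f j))) * (X i - C (a i)))) ∈ B ^ 2 := by
        have hmapB : Ideal.map (eval b : MvPolynomial (Fin n) k →+* k) I = B := by
          rw [hIdef, Ideal.map_span, ← Set.range_comp, hB]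
          congr 1
          exact congrArg Set.range (funext fun i => by
            show eval b (X i - C (a i)) = d i
            simp [hd])
        rw [← hmapB, sq, ← Ideal.map_mul, ← sq]
        exact Ideal.mem_map_of_mem _ h1
      have h4 : eval b (f j - (C (eval a (f j)) + ∑ i, C (eval a (pderiv i (f j))) * (X i - C (a i))))
          = -(∑ i, eval a (pderiv i (f j)) * d i) := by
        rw [map_sub, hb j, map_add, map_sum, hz j, C_0, map_zero]
        simp only [map_mul, map_sub, eval_C, eval_X, hd]
        ring
      rw [h4] at h2
      simpa using (neg_mem_iff.mp h2)
    have hBB2 : B ≤ B ^ 2 := by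
      rw [hB, Ideal.span_le]
      rintro _ ⟨i, rfl⟩
      exact aux_linalg (RingHom.id k) (Matrix.of fun i j : Fin n => eval a (pderiv i (f j))) hJ
        d (B ^ 2) (fun j => by simpa using htayb j) i
    have hsmB : B • B = B ^ 2 := by rw [smul_eq_mul, sq]
    obtain ⟨r, hr1, hr2⟩ := Submodule.exists_sub_one_mem_and_smul_eq_zero_of_fg_of_le_smul B B
      (Submodule.fg_span (Set.finite_range _)) (hsmB ▸ hBB2)
    have hBjac : B ≤ (⊥ : Ideal k).jacobson := by
      rw [hB, Ideal.span_le]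
      rintro _ ⟨i, rfl⟩
      exact hbj i
    have hrunit : IsUnit r := by
      have := Ideal.mem_jacobson_bot.mp (hBjac hr1) 1
      rwa [mul_one, sub_add_cancel] at this
    funext i
    have h0 : r * d i = 0 := hr2 (d i) (Ideal.subset_span ⟨i, rfl⟩)
    have hd0 : d i = 0 := by
      have h2 : r * d i = r * 0 := by rw [h0, mul_zero]
      exact hrunit.mul_left_cancel h2
    have hba : b i - a i = 0 := hd0
    exact sub_eq_zero.mp hba
end

section
/- Let A ⊆ B be commutative rings, x ∈ B such that B is finite (finitely generated as a module) over the subring A[x], and let I be an ideal of A such that B/IB is a finite A/I-algebra (finitely generated as a module over A/I). Then there exists s ∈ B with s − 1 ∈ I·B such that s and s·x are integral over A. -/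
open Polynomial

/-- If `v` is integral over `A` and `v * x ^ k + L(x) = 0` with `deg L < k`,
then `v * x` is integral over `A`. -/
lemma lemA {A B : Type*} [CommRing A] [CommRing B] [Algebra A B] {x v : B}
    (hv : IsIntegral A v) {k : ℕ} {L : Polynomial A} (hL : L.natDegree < k)
    (hrel : v * x ^ k + aeval x L = 0) : IsIntegral A (v * x) := by
  by_cases hv0 : v = 0
  · simpa [hv0] using isIntegral_zero
  set R := Algebra.adjoin A ({v} : Set B)
  have hvR : v ∈ R := Algebra.self_mem_adjoin_singleton A v
  set v' : R := ⟨v, hvR⟩ with hv'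
  have hv'0 : v' ≠ 0 := by
    intro h
    exact hv0 (congrArg (Subtype.val) h)
  set r : Polynomial R := C v' * X ^ k + L.map (algebraMap A R) with hr
  have hev : aeval x r = 0 := by
    simp only [hr, aeval_add, aeval_mul, aeval_C, aeval_X_pow, aeval_map_algebraMap]
    simpa using hrel
  have hLd : (L.map (algebraMap A R)).natDegree < k :=
    lt_of_le_of_lt natDegree_map_le hL
  have hdeg : r.natDegree = k := by
    have h1 : r.coeff k = v' := by
      rw [hr, coeff_add, coeff_C_mul, coeff_X_pow, if_pos rfl, mul_one,
        coeff_eq_zero_of_natDegree_lt hLd, add_zero]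
    have hle : r.natDegree ≤ k :=
      le_trans (natDegree_add_le _ _)
        (max_le (natDegree_C_mul_X_pow_le _ _) (le_of_lt hLd))
    have hge : k ≤ r.natDegree := le_natDegree_of_ne_zero (by rw [h1]; exact hv'0)
    omega
  have hlead : r.leadingCoeff = v' := by
    rw [leadingCoeff, hdeg, hr, coeff_add, coeff_C_mul, coeff_X_pow, if_pos rfl, mul_one,
      coeff_eq_zero_of_natDegree_lt hLd, add_zero]
  have hint : IsIntegral R (v * x) := by
    have := isIntegral_leadingCoeff_smul (R := R) (x := x) (p := r) hev
    rw [hlead] at this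
    have hsm : v' • x = v * x := by
      rw [Algebra.smul_def]; rfl
    rwa [hsm] at this
  haveI : Algebra.IsIntegral A R :=
    Algebra.IsIntegral.adjoin (by rintro y hy; rw [Set.mem_singleton_iff] at hy; subst hy; exact hv)
  exact isIntegral_trans (v * x) hint

/-- relation for the Horner truncation: `(P /ₘ X^k)(x) * x^k + (P %ₘ X^k)(x) = 0`. -/
lemma hrelk {A B : Type*} [CommRing A] [CommRing B] [Algebra A B] {x : B}
    {P : Polynomial A} (hP : aeval x P = 0) (k : ℕ) :
    aeval x (P /ₘ X ^ k) * x ^ k + aeval x (P %ₘ X ^ k) = 0 := by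
  have h := modByMonic_add_div P (X ^ k)
  have := congrArg (aeval x) h
  rw [map_add, map_mul, map_pow, aeval_X, hP] at this
  linear_combination this

lemma lemH {A B : Type*} [CommRing A] [CommRing B] [Algebra A B] {x : B}
    {P : Polynomial A} (hP : aeval x P = 0) (k : ℕ) :
    IsIntegral A (aeval x (P /ₘ X ^ k)) := by
  suffices H : ∀ d k : ℕ, P.natDegree + 1 ≤ k + d → IsIntegral A (aeval x (P /ₘ X ^ k)) by
    exact H (P.natDegree + 1) k (Nat.le_add_left _ _)
  intro d
  induction d with
  | zero =>
    intro k hk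
    rcases subsingleton_or_nontrivial A with hA | hA
    · haveI := Module.subsingleton A B
      exact ⟨X, monic_X, Subsingleton.elim _ _⟩
    have h0 : P /ₘ X ^ k = 0 := by
      rcases eq_or_ne P 0 with rfl | hP0
      · simp [zero_divByMonic]
      · rw [divByMonic_eq_zero_iff (monic_X_pow k)]
        rw [degree_X_pow]
        exact lt_of_le_of_lt (degree_le_natDegree)
          (by exact_mod_cast Nat.lt_of_lt_of_le (Nat.lt_succ_self _) (by omega))
    rw [h0, map_zero]
    exact isIntegral_zero
  | succ d ih =>
    intro k hk
    rcases subsingleton_or_nontrivial A with hA | hA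
    · haveI := Module.subsingleton A B
      exact ⟨X, monic_X, Subsingleton.elim _ _⟩
    -- decompose `P /ₘ X^k = (P /ₘ X^(k+1)) * X + C c`
    have hstep : P /ₘ X ^ k = (P /ₘ X ^ (k + 1)) * X + C ((P /ₘ X ^ k).coeff 0) := by
      have h1 : P /ₘ X ^ (k + 1) = (P /ₘ X ^ k).divX := by
        refine (div_modByMonic_unique ((P /ₘ X ^ k).divX)
          (P %ₘ X ^ k + C ((P /ₘ X ^ k).coeff 0) * X ^ k) (monic_X_pow _) ⟨?_, ?_⟩).1
        · have hd := modByMonic_add_div P (X ^ k)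
          have hw := divX_mul_X_add (P /ₘ X ^ k)
          calc P %ₘ X ^ k + C ((P /ₘ X ^ k).coeff 0) * X ^ k
              + X ^ (k + 1) * (P /ₘ X ^ k).divX
              = P %ₘ X ^ k + X ^ k * ((P /ₘ X ^ k).divX * X + C ((P /ₘ X ^ k).coeff 0)) := by
                ring
            _ = P := by rw [hw, hd]
        · apply lt_of_le_of_lt (degree_add_le _ _)
          rw [degree_X_pow]
          apply max_lt
          · exact lt_trans (degree_modByMonic_lt _ (monic_X_pow k))
              (by rw [degree_X_pow]; exact_mod_cast Nat.lt_succ_self k)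
          · exact lt_of_le_of_lt (degree_C_mul_X_pow_le _ _)
              (by exact_mod_cast Nat.lt_succ_self k)
      rw [h1, divX_mul_X_add]
    have hv1 : IsIntegral A (aeval x (P /ₘ X ^ (k + 1))) := ih (k + 1) (by omega)
    have hvx : IsIntegral A (aeval x (P /ₘ X ^ (k + 1)) * x) := by
      apply lemA hv1 (L := P %ₘ X ^ (k + 1)) (k := k + 1)
      · have := natDegree_modByMonic_lt P (monic_X_pow (R := A) (k + 1)) ?_
        · simpa [natDegree_X_pow] using this
        · intro h
          have h2 := congrArg natDegree h
          rw [natDegree_X_pow, natDegree_one] at h2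
          omega
      · exact hrelk hP (k + 1)
    have : aeval x (P /ₘ X ^ k)
        = aeval x (P /ₘ X ^ (k + 1)) * x + algebraMap A B ((P /ₘ X ^ k).coeff 0) := by
      conv_lhs => rw [hstep]
      rw [map_add, map_mul, aeval_X, aeval_C]
    rw [this]
    exact hvx.add (isIntegral_algebraMap)

set_option maxHeartbeats 1000000 in
/-- **Case `n = 1` of Zariski Main Theorem à la Peskine.**
Let `A ⊆ B`, `x ∈ B` with `B` finite over the subring `A[x]`, and `I` an ideal of
`A` such that `B/IB` is a finite `A/I`-algebra. Then there exists `s ∈ 1 + I·B`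
such that `s` and `s·x` are integral over `A`. -/
theorem zmt_case_one {A B : Type*} [CommRing A] [CommRing B] [Algebra A B]
    (hinj : Function.Injective (algebraMap A B))
    (x : B) (hfinAx : Module.Finite (Algebra.adjoin A ({x} : Set B)) B)
    (I : Ideal A)
    (hfin : Module.Finite A (B ⧸ I.map (algebraMap A B))) :
    ∃ s : B, s - 1 ∈ I.map (algebraMap A B) ∧
      IsIntegral A s ∧ IsIntegral A (s * x) := by
  classical
  set J : Ideal B := I.map (algebraMap A B) with hJdef
  rcases subsingleton_or_nontrivial B with hB | hB
  · exact ⟨1, by simpa using J.zero_mem, isIntegral_one, ⟨X, monic_X, Subsingleton.elim _ _⟩⟩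
  haveI : Nontrivial A := (algebraMap A B).domain_nontrivial
  -- Step 1 : a monic polynomial F of degree ≥ 1 with F(x) ∈ I·B
  haveI := hfin
  haveI : Algebra.IsIntegral A (B ⧸ J) := Algebra.IsIntegral.of_finite A _
  obtain ⟨F₀, hF₀monic, hF₀⟩ :=
    (Algebra.IsIntegral.isIntegral (R := A) (Ideal.Quotient.mk J x))
  set F : Polynomial A := F₀ * X with hFdef
  have hFmonic : F.Monic := hF₀monic.mul monic_X
  have hFd : 1 ≤ F.natDegree := by
    rw [hFdef, hF₀monic.natDegree_mul monic_X, natDegree_X]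
    omega
  set y : B := aeval x F with hydef
  have hyJ : y ∈ J := by
    rw [← Ideal.Quotient.eq_zero_iff_mem]
    have h1 : (Ideal.Quotient.mk J) (aeval x F) = aeval (Ideal.Quotient.mk J x) F :=
      (aeval_algHom_apply (Ideal.Quotient.mkₐ A J) x F).symm
    rw [← aeval_def] at hF₀
    rw [hydef, h1, hFdef, map_mul, hF₀, zero_mul]
  -- Step 2 : algebra structures and finiteness over A[Y] (Y ↦ y)
  letI instR : Algebra (Polynomial A) B := (aeval y).toRingHom.toAlgebra
  haveI towAB : IsScalarTower A (Polynomial A) B :=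
    IsScalarTower.of_algebraMap_eq fun a => (aeval_C y a).symm
  set S := Algebra.adjoin A ({x} : Set B) with hSdef
  have hxS : x ∈ S := Algebra.self_mem_adjoin_singleton A x
  set x' : S := ⟨x, hxS⟩ with hx'def
  have hyS : y ∈ S := by
    rw [hSdef, Algebra.adjoin_singleton_eq_range_aeval]; exact ⟨F, rfl⟩
  set y' : S := ⟨y, hyS⟩ with hy'def
  have hy'F : aeval x' F = y' := by
    apply Subtype.ext
    have := aeval_algHom_apply S.val x' F
    exact this.symm.trans rfl
  letI instRS : Algebra (Polynomial A) S := (aeval y').toRingHom.toAlgebra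
  haveI towAS : IsScalarTower A (Polynomial A) S :=
    IsScalarTower.of_algebraMap_eq fun a => (aeval_C y' a).symm
  haveI towRSB : IsScalarTower (Polynomial A) S B := by
    apply IsScalarTower.of_algebraMap_eq
    intro p
    show aeval y p = S.val (aeval y' p)
    rw [← aeval_algHom_apply S.val y' p]
    rfl
  have hx'int : IsIntegral (Polynomial A) x' := by
    refine ⟨F.map C - C X, ?_, ?_⟩
    · apply Monic.sub_of_left (hFmonic.map C)
      refine lt_of_le_of_lt degree_C_le ?_
      rw [degree_eq_natDegree (hFmonic.map C).ne_zero, hFmonic.natDegree_map C]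
      exact_mod_cast Nat.lt_of_lt_of_le Nat.zero_lt_one hFd
    · have hz : aeval x' (F.map C - C X) = 0 := by
        rw [map_sub, ← Polynomial.algebraMap_eq, aeval_map_algebraMap, aeval_C, hy'F]
        have h7 : algebraMap (Polynomial A) S X = y' := by
          show aeval y' (X : Polynomial A) = y'
          rw [aeval_X]
        rw [h7, sub_self]
      simpa [aeval_def] using hz
  have hadjA : Algebra.adjoin A ({x'} : Set S) = ⊤ := by
    rw [eq_top_iff]
    rintro ⟨z, hz⟩ -
    rw [hSdef, Algebra.adjoin_singleton_eq_range_aeval] at hz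
    obtain ⟨q, hq⟩ := hz
    rw [Algebra.adjoin_singleton_eq_range_aeval]
    refine ⟨q, Subtype.ext ?_⟩
    show S.val (aeval x' q) = z
    rw [← aeval_algHom_apply S.val x' q]
    exact hq
  have hadj : Algebra.adjoin (Polynomial A) ({x'} : Set S) = ⊤ := by
    refine eq_top_iff.mpr fun z _ => ?_
    have hz' : z ∈ Algebra.adjoin A ({x'} : Set S) := by rw [hadjA]; exact Algebra.mem_top
    have hle : Algebra.adjoin A ({x'} : Set S)
        ≤ Subalgebra.restrictScalars A (Algebra.adjoin (Polynomial A) ({x'} : Set S)) :=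
      Algebra.adjoin_le fun w hw => by
        rw [Set.mem_singleton_iff] at hw
        subst hw
        exact Algebra.subset_adjoin rfl
    exact (Subalgebra.mem_restrictScalars (Polynomial A)).mp (hle hz')
  haveI hfinRS : Module.Finite (Polynomial A) S := by
    have hfg := hx'int.fg_adjoin_singleton
    rw [hadj] at hfg
    exact ⟨by simpa using hfg⟩
  haveI hfinSB : Module.Finite S B := hfinAx
  haveI hfinRB : Module.Finite (Polynomial A) B := Module.Finite.trans S B
  -- Step 3 : Cayley–Hamilton for multiplication by y
  set J' : Ideal (Polynomial A) := I.map (C : A →+* Polynomial A) with hJ'def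
  have hmapJ : J'.map (algebraMap (Polynomial A) B) = J := by
    rw [hJ'def, Ideal.map_map, hJdef]
    congr 1
    rw [← Polynomial.algebraMap_eq, ← IsScalarTower.algebraMap_eq]
  obtain ⟨p, hpmonic, -, hpcoeff, hpeval⟩ :=
    LinearMap.exists_monic_and_coeff_mem_pow_and_aeval_eq_zero_of_range_le_smul
      (Polynomial A) (Algebra.lmul (Polynomial A) B y) J' (by
        rintro z ⟨b, rfl⟩
        rw [Ideal.smul_top_eq_map, hmapJ]
        rw [Submodule.restrictScalars_mem]
        have h8 : (Algebra.lmul (Polynomial A) B y) b = y * b := by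
          simp [Algebra.coe_lmul_eq_mul]
        rw [h8]
        exact Ideal.mul_mem_right _ _ hyJ)
  have hyp0 : Polynomial.aeval (R := Polynomial A) y p = 0 := by
    have h1 := aeval_algHom_apply (Algebra.lmul (Polynomial A) B) y p
    rw [hpeval] at h1
    have h2 := congrArg (fun g : Module.End (Polynomial A) B => g 1) h1.symm
    simpa [Algebra.coe_lmul_eq_mul] using h2
  set m := p.natDegree with hmdef
  have hm : 1 ≤ m := by
    by_contra h
    have hm0 : m = 0 := by omega
    have : p = 1 := (hpmonic.natDegree_eq_zero).mp hm0
    rw [this, map_one] at hyp0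
    exact one_ne_zero hyp0
  -- Step 4 : the single-variable polynomial G with G(y) = 0
  set G : Polynomial A := p.eval (X : Polynomial A) with hGdef
  have hG0 : aeval y G = 0 := by
    have h2 : G = ∑ i ∈ Finset.range (m + 1), p.coeff i * X ^ i :=
      eval_eq_sum_range (X : Polynomial A)
    have h1 : Polynomial.aeval (R := Polynomial A) y p
        = ∑ i ∈ Finset.range (m + 1), aeval y (p.coeff i) * y ^ i := by
      rw [aeval_eq_sum_range (R := Polynomial A) (p := p) y]
      refine Finset.sum_congr rfl fun i _ => ?_
      rw [Algebra.smul_def]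
      rfl
    rw [h2, map_sum]
    rw [h1] at hyp0
    rw [← hyp0]
    refine Finset.sum_congr rfl fun i _ => ?_
    rw [map_mul, map_pow, aeval_X]
  have hGXm : G - X ^ m ∈ J' := by
    have h2 : G = ∑ i ∈ Finset.range (m + 1), p.coeff i * X ^ i :=
      eval_eq_sum_range (X : Polynomial A)
    have h3 : G - X ^ m = ∑ i ∈ Finset.range m, p.coeff i * X ^ i := by
      rw [h2, Finset.sum_range_succ, hpmonic.coeff_natDegree, one_mul]
      ring
    rw [h3]
    refine Ideal.sum_mem _ fun i hi => ?_
    refine Ideal.mul_mem_right _ _ ?_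
    have := hpcoeff i
    rw [Finset.mem_range] at hi
    exact Ideal.pow_le_self (by omega) this
  -- Step 5 : P := G ∘ F kills x and is ≡ F^m mod I
  set P : Polynomial A := G.comp F with hPdef
  have hPx : aeval x P = 0 := by
    rw [hPdef, aeval_comp, ← hydef, hG0]
  have hQmem : P - F ^ m ∈ Ideal.map (C : A →+* Polynomial A) I := by
    have h1 : P - F ^ m = (G - X ^ m).comp F := by
      rw [sub_comp, X_pow_comp, hPdef]
    rw [h1]
    have hcomp : ∀ q ∈ J', q.comp F ∈ J' := by
      intro q hq
      refine Submodule.span_induction ?_ ?_ ?_ ?_ hq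
      · rintro r ⟨a, ha, rfl⟩
        rw [C_comp]
        exact Ideal.mem_map_of_mem C ha
      · rw [zero_comp]; exact zero_mem _
      · intro q₁ q₂ _ _ h₁ h₂
        rw [add_comp]; exact add_mem h₁ h₂
      · intro r q₁ _ h₁
        rw [smul_eq_mul, mul_comp]
        exact Ideal.mul_mem_left _ _ h₁
    exact hcomp _ hGXm
  have hQ : ∀ j, (P - F ^ m).coeff j ∈ I := fun j =>
    (Ideal.mem_map_C_iff).mp hQmem j
  set D := m * F.natDegree with hDdef
  have hFmD : (F ^ m).natDegree = D := hFmonic.natDegree_pow m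
  have hD1 : 1 ≤ D := by
    rw [hDdef]
    exact Nat.one_le_iff_ne_zero.mpr (by positivity)
  have hP_D : P.coeff D - 1 ∈ I := by
    have := hQ D
    rwa [coeff_sub, ← hFmD, (hFmonic.pow m).coeff_natDegree, hFmD] at this
  have hP_hi : ∀ j, 1 ≤ j → P.coeff (D + j) ∈ I := by
    intro j hj
    have := hQ (D + j)
    rwa [coeff_sub, coeff_eq_zero_of_natDegree_lt (by omega : (F ^ m).natDegree < D + j),
      sub_zero] at this
  -- Step 6 : the element s
  set W : Polynomial A := P /ₘ X ^ D with hWdef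
  have hXD1 : (X ^ D : Polynomial A) ≠ 1 := by
    intro h
    have := congrArg natDegree h
    rw [natDegree_X_pow, natDegree_one] at this
    omega
  have hWcoeff : ∀ j, W.coeff j = P.coeff (D + j) := by
    intro j
    have hdiv := modByMonic_add_div P (X ^ D)
    have h1 := congrArg (fun q : Polynomial A => q.coeff (D + j)) hdiv
    rw [coeff_add, coeff_eq_zero_of_natDegree_lt
        (lt_of_lt_of_le (natDegree_modByMonic_lt P (monic_X_pow D) hXD1)
          (by rw [natDegree_X_pow]; omega)),
      zero_add] at h1
    rw [← h1, add_comm D j, coeff_X_pow_mul]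
  refine ⟨aeval x W, ?_, lemH hPx D, lemA (lemH hPx D) (k := D) (L := P %ₘ X ^ D)
      (lt_of_lt_of_le (natDegree_modByMonic_lt P (monic_X_pow D) hXD1)
        (by rw [natDegree_X_pow])) (hrelk hPx D)⟩
  -- membership : s - 1 ∈ I·B
  rw [aeval_eq_sum_range (p := W) x, Finset.sum_range_succ']
  have hmem1 : (∑ i ∈ Finset.range W.natDegree, W.coeff (i + 1) • x ^ (i + 1)) ∈ J := by
    refine Ideal.sum_mem _ fun i _ => ?_
    rw [Algebra.smul_def]
    exact Ideal.mul_mem_right _ _ (Ideal.mem_map_of_mem _ (by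
      rw [hWcoeff (i + 1)]; exact hP_hi (i + 1) (by omega)))
  have hmem0 : W.coeff 0 • x ^ 0 - 1 ∈ J := by
    rw [pow_zero, Algebra.smul_def, mul_one, hWcoeff 0, add_zero]
    have : algebraMap A B (P.coeff D) - 1 = algebraMap A B (P.coeff D - 1) := by
      rw [map_sub, map_one]
    rw [this]
    exact Ideal.mem_map_of_mem _ hP_D
  have := add_mem hmem1 hmem0
  convert this using 1
  ring
end

section
/- Let R ⊆ S be commutative rings and x ∈ S satisfy aₙxⁿ + aₙ₋₁xⁿ⁻¹ + ⋯ + a₀ = 0 with a₀,…,aₙ ∈ R. Define uₙ = aₙ and u_{j} = u_{j+1}·x + a_j for j = n−1, n−2, …, 0 (so u₀ = 0). Then u₀,…,uₙ and u₀·x,…,uₙ·x are all integral over R, and ⟨u₀,…,uₙ⟩ = ⟨a₀,…,aₙ⟩ as ideals of the subring R[x] of S. -/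
open Polynomial Finset

set_option synthInstance.maxHeartbeats 1000000 in
set_option maxHeartbeats 1000000 in
lemma aux_mul_integral {R S : Type*} [CommRing R] [CommRing S] [Algebra R S]
    (x y : S) (hy : IsIntegral R y) (j : ℕ) (c : ℕ → R)
    (hrel : y * x ^ j + ∑ i ∈ Finset.range j, algebraMap R S (c i) * x ^ i = 0) :
    IsIntegral R (y * x) := by
  rcases j with _ | m
  · simp only [pow_zero, mul_one, Finset.range_zero, Finset.sum_empty, add_zero] at hrel
    rw [hrel, zero_mul]; exact isIntegral_zero
  · set A := Algebra.adjoin R ({y} : Set S) with hA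
    have hyA : y ∈ A := Algebra.self_mem_adjoin_singleton R y
    haveI : Algebra.IsIntegral R A :=
      Algebra.IsIntegral.adjoin (by rintro z rfl; exact hy)
    have hmem : ∀ i, algebraMap R S (c i) * y ^ (m - i) ∈ A := fun i =>
      mul_mem (Subalgebra.algebraMap_mem A (c i)) (pow_mem hyA _)
    set q : Polynomial A :=
      X ^ (m + 1) + ∑ i ∈ Finset.range (m + 1), C (⟨_, hmem i⟩ : A) * X ^ i with hq
    have hdeg : (∑ i ∈ Finset.range (m + 1), C (⟨_, hmem i⟩ : A) * X ^ i).degree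
        ≤ (m : WithBot ℕ) :=
      (degree_sum_le _ _).trans (Finset.sup_le fun i hi =>
        (degree_C_mul_X_pow_le i _).trans
          (by exact_mod_cast Nat.le_of_lt_succ (Finset.mem_range.mp hi)))
    have hmonic : q.Monic :=
      monic_X_pow_add (hdeg.trans_lt (by exact_mod_cast Nat.lt_succ_self m))
    have heval : Polynomial.aeval (y * x) q = 0 := by
      have h1 : Polynomial.aeval (y * x) q
          = (y * x) ^ (m + 1) + ∑ i ∈ Finset.range (m + 1),
              (algebraMap R S (c i) * y ^ (m - i)) * (y * x) ^ i := by
        rw [hq, map_add, map_pow, aeval_X, map_sum]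
        congr 1
        refine Finset.sum_congr rfl fun i _ => ?_
        rw [map_mul, map_pow, aeval_X, aeval_C]
        rfl
      rw [h1]
      have hterm : ∀ i ∈ Finset.range (m + 1),
          (algebraMap R S (c i) * y ^ (m - i)) * (y * x) ^ i
            = y ^ m * (algebraMap R S (c i) * x ^ i) := by
        intro i hi
        rw [mul_pow, show algebraMap R S (c i) * y ^ (m - i) * (y ^ i * x ^ i)
              = y ^ (m - i) * y ^ i * (algebraMap R S (c i) * x ^ i) from by ring,
          ← pow_add, Nat.sub_add_cancel (Nat.le_of_lt_succ (Finset.mem_range.mp hi))]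
      rw [Finset.sum_congr rfl hterm, ← Finset.mul_sum,
        show (y * x) ^ (m + 1) = y ^ m * (y * x ^ (m + 1)) from by
          rw [mul_pow, pow_succ y m]; ring,
        ← mul_add, hrel, mul_zero]
    exact isIntegral_trans (y * x) ⟨q, hmonic, heval⟩

set_option maxHeartbeats 1000000
set_option synthInstance.maxHeartbeats 1000000
set_option linter.unusedVariables false


/-- **Emmanuel's lemma.** If `x ∈ S` satisfies `aₙxⁿ + ⋯ + a₀ = 0` with coefficients
in `R ⊆ S`, and `uₙ = aₙ`, `u_j = u_{j+1}·x + a_j` (so `u₀ = 0`), then all `u_i` and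
`u_i·x` are integral over `R`, and `⟨u₀,…,uₙ⟩ = ⟨a₀,…,aₙ⟩` as ideals of `R[x]`. -/
theorem emmanuel_lemma {R S : Type*} [CommRing R] [CommRing S] [Algebra R S]
    (hinj : Function.Injective (algebraMap R S))
    (n : ℕ) (a : Fin (n + 1) → R) (x : S)
    (h : ∑ i : Fin (n + 1), algebraMap R S (a i) * x ^ (i : ℕ) = 0)
    (u : Fin (n + 1) → S)
    (hlast : u (Fin.last n) = algebraMap R S (a (Fin.last n)))
    (hstep : ∀ j : Fin n, u j.castSucc = u j.succ * x + algebraMap R S (a j.castSucc)) :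
    (∀ i, IsIntegral R (u i)) ∧ (∀ i, IsIntegral R (u i * x)) ∧
    ∃ hmem : ∀ i, u i ∈ Algebra.adjoin R ({x} : Set S),
      Ideal.span (Set.range fun i => (⟨u i, hmem i⟩ : Algebra.adjoin R ({x} : Set S))) =
      Ideal.span (Set.range fun i =>
        (⟨algebraMap R S (a i), Subalgebra.algebraMap_mem _ (a i)⟩ :
          Algebra.adjoin R ({x} : Set S))) := by
  classical
  set A : ℕ → R := fun i => if hi : i < n + 1 then a ⟨i, hi⟩ else 0 with hAdef
  have hAval : ∀ i : Fin (n + 1), A (i : ℕ) = a i := by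
    intro i; simp only [hAdef, i.isLt, dif_pos, Fin.eta]
  -- key identity
  have key : ∀ j : Fin (n + 1),
      u j * x ^ (j : ℕ) + ∑ i ∈ Finset.range (j : ℕ), algebraMap R S (A i) * x ^ i = 0 := by
    intro j
    induction j using Fin.reverseInduction with
    | last =>
      have h' : ∑ i ∈ Finset.range (n + 1), algebraMap R S (A i) * x ^ i = 0 := by
        rw [← Fin.sum_univ_eq_sum_range (fun i => algebraMap R S (A i) * x ^ i) (n + 1), ← h]
        exact Finset.sum_congr rfl fun i _ => by rw [hAval]
      rw [Finset.sum_range_succ] at h'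
      have hAn : A n = a (Fin.last n) := by simpa using hAval (Fin.last n)
      rw [hAn] at h'
      rw [Fin.val_last, hlast]
      linear_combination h'
    | cast j ih =>
      rw [Fin.coe_castSucc, hstep j]
      rw [Fin.val_succ, Finset.sum_range_succ] at ih
      have hAj : A (j : ℕ) = a j.castSucc := by
        have := hAval j.castSucc; rwa [Fin.coe_castSucc] at this
      rw [hAj] at ih
      linear_combination ih
  -- integrality of u
  have hu : ∀ j, IsIntegral R (u j) := by
    intro j
    induction j using Fin.reverseInduction with
    | last => rw [hlast]; exact isIntegral_algebraMap
    | cast j ih =>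
      rw [hstep j]
      have hk := key j.succ
      rw [Fin.val_succ] at hk
      exact (aux_mul_integral x (u j.succ) ih ((j : ℕ) + 1) A hk).add isIntegral_algebraMap
  have hux : ∀ j, IsIntegral R (u j * x) := fun j =>
    aux_mul_integral x (u j) (hu j) (j : ℕ) A (key j)
  -- membership in the adjoin
  have hxmem : x ∈ Algebra.adjoin R ({x} : Set S) := Algebra.self_mem_adjoin_singleton R x
  have hmem : ∀ i, u i ∈ Algebra.adjoin R ({x} : Set S) := by
    intro i
    induction i using Fin.reverseInduction with
    | last => rw [hlast]; exact Subalgebra.algebraMap_mem _ _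
    | cast j ih => rw [hstep j]; exact add_mem (mul_mem ih hxmem) (Subalgebra.algebraMap_mem _ _)
  refine ⟨hu, hux, hmem, ?_⟩
  apply le_antisymm
  · rw [Ideal.span_le]
    rintro _ ⟨i, rfl⟩
    simp only [SetLike.mem_coe]
    induction i using Fin.reverseInduction with
    | last =>
      have heq : (⟨u (Fin.last n), hmem _⟩ : Algebra.adjoin R ({x} : Set S))
          = ⟨algebraMap R S (a (Fin.last n)), Subalgebra.algebraMap_mem _ _⟩ :=
        Subtype.ext hlast
      rw [heq]
      exact Ideal.subset_span ⟨Fin.last n, rfl⟩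
    | cast j ih =>
      have heq : (⟨u j.castSucc, hmem _⟩ : Algebra.adjoin R ({x} : Set S))
          = ⟨u j.succ, hmem _⟩ * ⟨x, hxmem⟩
            + ⟨algebraMap R S (a j.castSucc), Subalgebra.algebraMap_mem _ _⟩ :=
        Subtype.ext (hstep j)
      rw [heq]
      exact add_mem (Ideal.mul_mem_right _ _ ih) (Ideal.subset_span ⟨j.castSucc, rfl⟩)
  · rw [Ideal.span_le]
    rintro _ ⟨i, rfl⟩
    simp only [SetLike.mem_coe]
    induction i using Fin.lastCases with
    | last =>
      have heq : (⟨algebraMap R S (a (Fin.last n)), Subalgebra.algebraMap_mem _ _⟩ :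
          Algebra.adjoin R ({x} : Set S)) = ⟨u (Fin.last n), hmem _⟩ :=
        Subtype.ext hlast.symm
      rw [heq]
      exact Ideal.subset_span ⟨Fin.last n, rfl⟩
    | cast j =>
      have heq : (⟨algebraMap R S (a j.castSucc), Subalgebra.algebraMap_mem _ _⟩ :
          Algebra.adjoin R ({x} : Set S))
          = ⟨u j.castSucc, hmem _⟩ - ⟨u j.succ, hmem _⟩ * ⟨x, hxmem⟩ := by
        apply Subtype.ext
        show algebraMap R S (a j.castSucc) = u j.castSucc - u j.succ * x
        rw [hstep j]; ring
      rw [heq]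
      exact sub_mem (Ideal.subset_span ⟨j.castSucc, rfl⟩)
        (Ideal.mul_mem_right _ _ (Ideal.subset_span ⟨j.succ, rfl⟩))
end

section
/- Let R ⊆ S be commutative rings, x, t ∈ S, with t integral over the subring R[x]. Let p ∈ R[X] be a monic polynomial such that t·p(x) ∈ R[x]. Then there exists q ∈ R[x] such that t − q is integral over R. -/
open Polynomial

lemma isIntegral_of_fg_one_mem' {R S : Type*} [CommRing R] [CommRing S] [Algebra R S]
    (N : Submodule R S) (hfg : N.FG) (h1 : (1:S) ∈ N) (t : S) (h : ∀ y ∈ N, t * y ∈ N) :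
    IsIntegral R t := by
  haveI : Module.Finite R N := Module.Finite.iff_fg.mpr hfg
  let φ : Module.End R N :=
    { toFun := fun y => ⟨t * y, h y y.2⟩
      map_add' := fun a b => by ext; simp [mul_add]
      map_smul' := fun m a => by ext; simp [mul_smul_comm] }
  obtain ⟨P, hPm, hP⟩ := (Module.End.isIntegral (R := R) (M := N)).isIntegral φ
  rw [← Polynomial.aeval_def] at hP
  have hpow : ∀ (i : ℕ) (y : N), (((φ^i) y : N) : S) = t^i * y := by
    intro i
    induction i with
    | zero => intro y; simp
    | succ i ih =>
      intro y
      rw [pow_succ', Module.End.mul_apply]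
      show t * (((φ ^ i) y : N) : S) = t ^ (i+1) * ↑y
      rw [ih, pow_succ']; ring
  refine ⟨P, hPm, ?_⟩
  have h3 := congrArg (Subtype.val) (LinearMap.congr_fun hP (⟨1, h1⟩ : N))
  rw [Polynomial.aeval_endomorphism] at h3
  have h4 : ((P.sum fun n b => b • (φ ^ n) ⟨1, h1⟩ : N) : S) = P.sum fun n b => b • (t ^ n) := by
    rw [show ((P.sum fun n b => b • (φ ^ n) ⟨1, h1⟩ : N) : S)
        = N.subtype (P.sum fun n b => b • (φ ^ n) ⟨1, h1⟩) from rfl]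
    rw [Polynomial.sum, map_sum, Polynomial.sum]
    refine Finset.sum_congr rfl fun i _ => ?_
    rw [map_smul]
    show P.coeff i • (((φ ^ i) ⟨1, h1⟩ : N) : S) = _
    rw [hpow, mul_one]
  rw [h4] at h3
  have : Polynomial.aeval t P = 0 := by
    rw [Polynomial.aeval_def, Polynomial.eval₂_eq_sum]
    simpa [Algebra.smul_def] using h3
  rwa [Polynomial.aeval_def] at this

/-- If `t` is integral over `R[x]` and `p ∈ R[X]` is monic with `t·p(x) ∈ R[x]`,
then there exists `q ∈ R[x]` such that `t − q` is integral over `R`. -/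
theorem sub_isIntegral_of_monic {R S : Type*} [CommRing R] [CommRing S] [Algebra R S]
    (hinj : Function.Injective (algebraMap R S))
    (x t : S) (ht : IsIntegral (Algebra.adjoin R ({x} : Set S)) t)
    (p : Polynomial R) (hp : p.Monic)
    (hmem : t * Polynomial.aeval x p ∈ Algebra.adjoin R ({x} : Set S)) :
    ∃ q ∈ Algebra.adjoin R ({x} : Set S), IsIntegral R (t - q) := by
  rcases subsingleton_or_nontrivial S with hS | hS
  · exact ⟨0, Subalgebra.zero_mem _, ⟨X, monic_X, Subsingleton.elim _ _⟩⟩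
  haveI : Nontrivial R := by
    refine ⟨0, 1, fun h01 => ?_⟩
    have : (0 : S) = 1 := by rw [← (algebraMap R S).map_zero, h01, (algebraMap R S).map_one]
    exact zero_ne_one this
  set A := Algebra.adjoin R ({x} : Set S) with hA
  haveI : Nontrivial A := by
    refine ⟨0, 1, fun h01 => zero_ne_one (α := S) ?_⟩
    simpa using congrArg (Subtype.val) h01
  rw [hA, Algebra.adjoin_singleton_eq_range_aeval] at hmem
  obtain ⟨f₀, hf₀⟩ := hmem
  classical
  set d := p.natDegree with hd
  set q := Polynomial.aeval x (f₀ /ₘ p) with hq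
  have hqA : q ∈ A := by
    rw [hA, Algebra.adjoin_singleton_eq_range_aeval]; exact ⟨f₀ /ₘ p, rfl⟩
  set t' := t - q with ht'def
  set r₀ := f₀ %ₘ p with hr₀def
  -- key multiplicative relation
  have htz : t' * Polynomial.aeval x p = Polynomial.aeval x r₀ := by
    have hf₀' : Polynomial.aeval x f₀ = t * Polynomial.aeval x p := hf₀
    have hsplit : r₀ = f₀ - p * (f₀ /ₘ p) :=
      eq_sub_of_add_eq (Polynomial.modByMonic_add_div f₀ p)
    rw [hsplit, map_sub, map_mul, hf₀', ht'def, hq]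
    ring
  have hr₀ : r₀ = 0 ∨ r₀.natDegree + 1 ≤ d := by
    by_cases h0 : r₀ = 0
    · exact Or.inl h0
    · exact Or.inr (Polynomial.natDegree_lt_natDegree h0 (Polynomial.degree_modByMonic_lt f₀ hp))
  -- t' is integral over A
  have ht' : IsIntegral A t' := by
    refine ht.sub ?_
    exact isIntegral_algebraMap (x := (⟨q, hqA⟩ : A))
  obtain ⟨Φ₀, hΦ₀m, hΦ₀⟩ := ht'
  set Φ := Φ₀ * X with hΦdef
  have hΦm : Φ.Monic := hΦ₀m.mul monic_X
  have hΦ : Polynomial.eval₂ (algebraMap A S) t' Φ = 0 := by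
    rw [hΦdef, Polynomial.eval₂_mul, hΦ₀, zero_mul]
  set n := Φ.natDegree with hn
  have hn1 : 1 ≤ n := by
    rw [hn, hΦdef, hΦ₀m.natDegree_mul monic_X, natDegree_X]
    omega
  set c : ℕ → S := fun i => algebraMap A S (Φ.coeff i) with hc
  have heq : t' ^ n + ∑ i ∈ Finset.range n, c i * t' ^ i = 0 := by
    rw [Polynomial.eval₂_eq_sum_range, Finset.sum_range_succ, ← hn, hΦm.coeff_natDegree,
      map_one, one_mul] at hΦ
    rw [add_comm]
    exact hΦ
  have heqn : t' ^ n = -∑ i ∈ Finset.range n, c i * t' ^ i :=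
    eq_neg_of_add_eq_zero_left heq
  have hgex : ∀ i, ∃ gi : Polynomial R, Polynomial.aeval x gi = c i := by
    intro i
    have hmem' : c i ∈ A := by
      rw [hc]
      exact (Φ.coeff i).2
    rw [hA, Algebra.adjoin_singleton_eq_range_aeval] at hmem'
    exact hmem'
  choose g hg using hgex
  set Dg := (Finset.range n).sup fun i => (g i).natDegree with hDg
  set K := d + Dg + n with hK
  set G : Finset S :=
    ((Finset.range (K+1)).image fun cc => x ^ cc) ∪
    (((Finset.range d) ×ˢ (Finset.Icc 1 n)).image fun ab => x ^ ab.1 * t' ^ ab.2) with hG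
  set M := Submodule.span R (G : Set S) with hM
  have hmono1 : ∀ cc ≤ K, x ^ cc ∈ M := by
    intro cc hcc
    apply Submodule.subset_span
    refine Finset.mem_coe.mpr (Finset.mem_union.mpr (Or.inl ?_))
    exact Finset.mem_image.mpr ⟨cc, Finset.mem_range.mpr (by omega), rfl⟩
  have hmono2 : ∀ a < d, ∀ b, 1 ≤ b → b ≤ n → x ^ a * t' ^ b ∈ M := by
    intro a ha b hb1 hbn
    apply Submodule.subset_span
    refine Finset.mem_coe.mpr (Finset.mem_union.mpr (Or.inr ?_))
    refine Finset.mem_image.mpr ⟨(a, b), ?_, rfl⟩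
    exact Finset.mem_product.mpr ⟨Finset.mem_range.mpr ha, Finset.mem_Icc.mpr ⟨hb1, hbn⟩⟩
  have hi : ∀ f : Polynomial R, f.natDegree ≤ K → Polynomial.aeval x f ∈ M := by
    intro f hf
    rw [Polynomial.aeval_eq_sum_range]
    refine Submodule.sum_mem _ fun i hi => ?_
    refine Submodule.smul_mem _ _ (hmono1 i ?_)
    simp only [Finset.mem_range] at hi
    omega
  have hii : ∀ f : Polynomial R, f.natDegree < d → ∀ b, 1 ≤ b → b ≤ n →
      Polynomial.aeval x f * t' ^ b ∈ M := by
    intro f hf b hb1 hbn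
    rw [Polynomial.aeval_eq_sum_range, Finset.sum_mul]
    refine Submodule.sum_mem _ fun i hi => ?_
    rw [smul_mul_assoc]
    refine Submodule.smul_mem _ _ (hmono2 i ?_ b hb1 hbn)
    simp only [Finset.mem_range] at hi
    omega
  have key : ∀ b, b ≤ n → ∀ f : Polynomial R, f.natDegree ≤ K + b →
      Polynomial.aeval x f * t' ^ b ∈ M := by
    intro b
    induction b with
    | zero =>
      intro _ f hf
      rw [pow_zero, mul_one]
      exact hi f (by omega)
    | succ b IH =>
      intro hbn f hf
      by_cases hfd : f.natDegree < d
      · exact hii f hfd (b+1) (by omega) hbn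
      · have hdf : d ≤ f.natDegree := le_of_not_gt hfd
        have hdecomp : Polynomial.aeval x f * t' ^ (b+1)
            = Polynomial.aeval x (r₀ * (f /ₘ p)) * t' ^ b
              + Polynomial.aeval x (f %ₘ p) * t' ^ (b+1) := by
          conv_lhs => rw [← Polynomial.modByMonic_add_div f p]
          rw [map_add, map_mul, map_mul, add_mul, pow_succ, ← htz]
          ring
        rw [hdecomp]
        refine Submodule.add_mem _ ?_ ?_
        · rcases hr₀ with h0 | hrd
          · simp [h0]
          · apply IH (by omega)
            have h1 : (r₀ * (f /ₘ p)).natDegree ≤ r₀.natDegree + (f /ₘ p).natDegree :=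
              Polynomial.natDegree_mul_le
            have h2 : (f /ₘ p).natDegree = f.natDegree - d :=
              Polynomial.natDegree_divByMonic f hp
            omega
        · by_cases hm0 : f %ₘ p = 0
          · simp [hm0]
          · have hlt : (f %ₘ p).natDegree < d :=
              Polynomial.natDegree_lt_natDegree hm0 (Polynomial.degree_modByMonic_lt f hp)
            exact hii _ hlt (b+1) (by omega) hbn
  -- closure of M under multiplication by t'
  have hgen : ∀ y ∈ G, t' * y ∈ M := by
    intro y hy
    simp only [hG, Finset.mem_union, Finset.mem_image, Finset.mem_range, Finset.mem_product,
      Finset.mem_Icc] at hy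
    rcases hy with ⟨cc, hcc, rfl⟩ | ⟨⟨a, b⟩, ⟨ha, hb1, hbn⟩, rfl⟩
    · have : t' * x ^ cc = Polynomial.aeval x ((X : Polynomial R) ^ cc) * t' ^ 1 := by
        rw [map_pow, aeval_X, pow_one]
        ring
      rw [this]
      exact key 1 hn1 _ (by rw [natDegree_X_pow]; omega)
    · dsimp only
      by_cases hbn' : b < n
      · have : t' * (x ^ a * t' ^ b) = Polynomial.aeval x ((X : Polynomial R) ^ a) * t' ^ (b+1) := by
          rw [map_pow, aeval_X, pow_succ]
          ring
        rw [this]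
        exact key (b+1) (by omega) _ (by rw [natDegree_X_pow]; omega)
      · have hbeq : b = n := by omega
        rw [hbeq]
        have hcalc : t' * (x ^ a * t' ^ n)
            = ∑ i ∈ Finset.range n, -(Polynomial.aeval x ((X : Polynomial R) ^ a * g i) * t' ^ (i+1)) := by
          rw [show t' * (x ^ a * t' ^ n) = x ^ a * t' * t' ^ n by ring, heqn]
          rw [mul_neg, Finset.mul_sum, ← Finset.sum_neg_distrib]
          refine Finset.sum_congr rfl fun i _ => ?_
          rw [map_mul, map_pow, aeval_X, hg i, pow_succ]
          ring
        rw [hcalc]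
        refine Submodule.sum_mem _ fun i hi => ?_
        simp only [Finset.mem_range] at hi
        refine Submodule.neg_mem _ ?_
        apply key (i+1) (by omega)
        have h1 : ((X : Polynomial R) ^ a * g i).natDegree ≤ a + (g i).natDegree := by
          have := Polynomial.natDegree_mul_le (p := (X : Polynomial R) ^ a) (q := g i)
          rwa [natDegree_X_pow] at this
        have h2 : (g i).natDegree ≤ Dg := by
          rw [hDg]
          exact Finset.le_sup (f := fun i => (g i).natDegree) (Finset.mem_range.mpr hi)
        omega
  have hcl : ∀ y ∈ M, t' * y ∈ M := by
    have hmap : M.map (LinearMap.mulLeft R t') ≤ M := by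
      rw [hM, Submodule.map_span, Submodule.span_le]
      rintro _ ⟨y, hyG, rfl⟩
      exact hgen y hyG
    intro y hy
    exact hmap ⟨y, hy, rfl⟩
  have h1M : (1 : S) ∈ M := by
    have := hmono1 0 (by omega)
    simpa using this
  exact ⟨q, hqA, isIntegral_of_fg_one_mem' M ⟨G, rfl⟩ h1M t' hcl⟩
end

section
/- Let R ⊆ S be commutative rings, x, t ∈ S, with t integral over the subring R[x]. Let p(X) = a_k X^k + ⋯ + a₀ ∈ R[X] be such that t·p(x) ∈ R[x]. Then there exist q ∈ R[x] and m ∈ ℕ such that a_k^m·t − q is integral over R. -/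
open Polynomial Matrix Finset

section helpers

variable {R : Type*} [CommRing R]

private theorem coeff_mul_bnd (p q : R[X]) {m n : ℕ} (hp : p.natDegree ≤ m)
    (hq : q.natDegree ≤ n) : (p * q).coeff (m + n) = p.coeff m * q.coeff n := by
  rw [coeff_mul, Finset.sum_eq_single (m, n)]
  · rintro ⟨i, j⟩ hij hne
    rw [Finset.HasAntidiagonal.mem_antidiagonal] at hij
    rcases lt_trichotomy i m with h | h | h
    · have hj : n < j := by omega
      rw [coeff_eq_zero_of_natDegree_lt (lt_of_le_of_lt hq hj), mul_zero]
    · exact absurd (by rw [Prod.mk.injEq]; exact ⟨h, by omega⟩) hne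
    · rw [coeff_eq_zero_of_natDegree_lt (lt_of_le_of_lt hp h), zero_mul]
  · intro h
    exact absurd (Finset.HasAntidiagonal.mem_antidiagonal.2 (rfl : m + n = m + n)) h

private theorem coeff_prod_bnd {ι : Type*} (s : Finset ι) (f : ι → R[X]) (b : ι → ℕ)
    (h : ∀ i ∈ s, (f i).natDegree ≤ b i) :
    (∏ i ∈ s, f i).coeff (∑ i ∈ s, b i) = ∏ i ∈ s, (f i).coeff (b i) := by
  induction s using Finset.cons_induction with
  | empty => simp
  | cons a s ha ih =>
    rw [Finset.prod_cons, Finset.sum_cons,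
      coeff_mul_bnd _ _ (h a (Finset.mem_cons_self a s))
        ((Polynomial.natDegree_prod_le s f).trans
          (Finset.sum_le_sum fun i hi => h i (Finset.mem_cons_of_mem hi))),
      ih (fun i hi => h i (Finset.mem_cons_of_mem hi)), Finset.prod_cons]

private theorem psdiv (k : ℕ) (a : R) (P : R[X]) (hP : P.natDegree ≤ k) (hPk : P.coeff k = a) :
    ∀ D (U : R[X]), U.natDegree ≤ D →
      ∃ (e : ℕ) (Q V : R[X]), V.natDegree ≤ k ∧ C a ^ e * U = Q * P + V := by
  intro D
  induction D with
  | zero =>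
    intro U hU
    exact ⟨0, 0, U, hU.trans (Nat.zero_le k), by ring⟩
  | succ D ih =>
    intro U hU
    by_cases hk : U.natDegree ≤ k
    · exact ⟨0, 0, U, hk, by ring⟩
    by_cases hD : U.natDegree ≤ D
    · exact ih U hD
    have hkD : k < D + 1 := by omega
    set U' := C a * U - C (U.coeff (D + 1)) * X ^ (D + 1 - k) * P with hU'def
    have hdeg : U'.natDegree ≤ D := by
      rw [natDegree_le_iff_coeff_eq_zero]
      intro m hm
      have h1 : (C a * U).coeff m = a * U.coeff m := by rw [coeff_C_mul]
      have h2 : (C (U.coeff (D + 1)) * X ^ (D + 1 - k) * P).coeff m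
          = U.coeff (D + 1) * P.coeff (m - (D + 1 - k)) := by
        rw [mul_assoc, coeff_C_mul, coeff_X_pow_mul' P (D + 1 - k) m, if_pos (by omega)]
      rw [hU'def, coeff_sub, h1, h2]
      rcases eq_or_lt_of_le (Nat.succ_le_of_lt hm) with h | h
      · have hmk : m - (D + 1 - k) = k := by omega
        rw [hmk, hPk, ← h]
        ring
      · have hU0 : U.coeff m = 0 := coeff_eq_zero_of_natDegree_lt (by omega)
        have hP0 : P.coeff (m - (D + 1 - k)) = 0 :=
          coeff_eq_zero_of_natDegree_lt (by omega)
        rw [hU0, hP0]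
        ring
    obtain ⟨e, Q, V, hV, hQ⟩ := ih U' hdeg
    refine ⟨e + 1, Q + C a ^ e * C (U.coeff (D + 1)) * X ^ (D + 1 - k), V, hV, ?_⟩
    have : C a ^ e * U' = Q * P + V := hQ
    rw [hU'def] at this
    ring_nf
    ring_nf at this
    linear_combination this

end helpers

section main

open Polynomial Matrix Finset

/-- If `t` is integral over `R[x]` and `p(X) = a_k X^k + ⋯ + a₀ ∈ R[X]` satisfies
`t·p(x) ∈ R[x]`, then there exist `q ∈ R[x]` and `m ∈ ℕ` such that
`a_k^m·t − q` is integral over `R`. -/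
theorem pow_mul_sub_isIntegral {R S : Type*} [CommRing R] [CommRing S] [Algebra R S]
    (hinj : Function.Injective (algebraMap R S))
    (x t : S) (ht : IsIntegral (Algebra.adjoin R ({x} : Set S)) t)
    (k : ℕ) (a : Fin (k + 1) → R)
    (hmem : t * (∑ i : Fin (k + 1), algebraMap R S (a i) * x ^ (i : ℕ)) ∈
      Algebra.adjoin R ({x} : Set S)) :
    ∃ q ∈ Algebra.adjoin R ({x} : Set S), ∃ m : ℕ,
      IsIntegral R (algebraMap R S (a (Fin.last k)) ^ m * t - q) := by
  classical
  rcases subsingleton_or_nontrivial S with hS | hS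
  · exact ⟨0, Subalgebra.zero_mem _, 0, ⟨X, monic_X, Subsingleton.elim _ _⟩⟩
  set A := Algebra.adjoin R ({x} : Set S) with hAdef
  have hA : ∀ y ∈ A, ∃ p : R[X], aeval x p = y := by
    intro y hy
    rwa [hAdef, Algebra.adjoin_singleton_eq_range_aeval, AlgHom.mem_range] at hy
  have hmemInt : ∀ y ∈ A, IsIntegral A y := by
    intro y hy
    have h1 : algebraMap A S ⟨y, hy⟩ = y := rfl
    exact h1 ▸ isIntegral_algebraMap
  rcases Nat.eq_zero_or_pos k with rfl | hkpos
  · refine ⟨t * (∑ i : Fin 1, algebraMap R S (a i) * x ^ (i : ℕ)), hmem, 1, ?_⟩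
    have h0 : algebraMap R S (a (Fin.last 0)) ^ 1 * t -
        t * (∑ i : Fin 1, algebraMap R S (a i) * x ^ (i : ℕ)) = 0 := by
      rw [Fin.sum_univ_one]
      show algebraMap R S (a 0) ^ 1 * t - t * (algebraMap R S (a 0) * x ^ ((0 : Fin 1) : ℕ)) = 0
      simp
      ring
    rw [h0]
    exact isIntegral_zero
  -- main case k ≥ 1
  set aR := a (Fin.last k) with haR
  set aS := algebraMap R S aR with haS
  set aN : ℕ → R := fun i => if h : i < k + 1 then a ⟨i, h⟩ else 0 with haN
  set Ph : R[X] := ∑ i ∈ range (k + 1), C (aN i) * X ^ i with hPh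
  have hPhdeg : Ph.natDegree ≤ k := by
    apply natDegree_sum_le_of_forall_le
    intro i hi
    exact (natDegree_C_mul_X_pow_le _ _).trans (by rw [mem_range] at hi; omega)
  have hPhc : ∀ m, Ph.coeff m = if m < k + 1 then aN m else 0 := by
    intro m
    rw [hPh, finset_sum_coeff]
    split_ifs with h
    · rw [Finset.sum_eq_single m]
      · simp
      · intro i _ hne
        simp [coeff_C_mul, coeff_X_pow, Ne.symm hne]
      · intro hm
        exact absurd (mem_range.2 h) hm
    · apply Finset.sum_eq_zero
      intro i hi
      rw [mem_range] at hi
      have : m ≠ i := by omega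
      simp [coeff_C_mul, coeff_X_pow, this]
  have hPhk : Ph.coeff k = aR := by
    rw [hPhc, if_pos (Nat.lt_succ_self k)]
    show (if h : k < k + 1 then a ⟨k, h⟩ else 0) = aR
    rw [dif_pos (Nat.lt_succ_self k)]
    rfl
  have hPhx : aeval x Ph = ∑ i : Fin (k + 1), algebraMap R S (a i) * x ^ (i : ℕ) := by
    rw [hPh, map_sum, ← Fin.sum_univ_eq_sum_range (fun i => aeval x (C (aN i) * X ^ i)) (k + 1)]
    apply Finset.sum_congr rfl
    intro i _
    rw [_root_.map_mul, aeval_C, _root_.map_pow, aeval_X]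
    show algebraMap R S (if h : (i : ℕ) < k + 1 then a ⟨(i : ℕ), h⟩ else 0) * x ^ (i : ℕ) = _
    rw [dif_pos i.isLt, Fin.eta]
  obtain ⟨U, hU⟩ := hA _ hmem
  obtain ⟨e, Q, V, hVdeg, hQeq⟩ := psdiv k aR Ph hPhdeg hPhk U.natDegree U le_rfl
  set q₁ := aeval x Q with hq₁
  set t₂ : S := aS ^ e * t - q₁ with ht₂def
  have hrel : t₂ * aeval x Ph = aeval x V := by
    have h1 := congrArg (aeval x) hQeq
    simp only [_root_.map_mul, _root_.map_add, _root_.map_pow, aeval_C] at h1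
    rw [hU, hPhx, ← haS] at h1
    rw [ht₂def, hPhx]
    linear_combination h1
  have hq₁A : q₁ ∈ A := by
    rw [hAdef, Algebra.adjoin_singleton_eq_range_aeval]
    exact ⟨Q, rfl⟩
  have ht₂int : IsIntegral A t₂ := by
    apply IsIntegral.sub
    · exact (hmemInt _ (pow_mem (Subalgebra.algebraMap_mem A aR) e)).mul ht
    · exact hmemInt _ hq₁A
  obtain ⟨Pm, hPmMonic, hPmEval⟩ := ht₂int
  set n := Pm.natDegree with hn
  have hn1 : 1 ≤ n := by
    by_contra h
    have h0 : Pm.natDegree = 0 := by omega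
    rw [hPmMonic.natDegree_eq_zero.mp h0] at hPmEval
    rw [eval₂_one] at hPmEval
    exact one_ne_zero hPmEval
  have hsum0 : t₂ ^ n + ∑ j ∈ range n, algebraMap A S (Pm.coeff j) * t₂ ^ j = 0 := by
    have h0 := hPmEval
    rw [eval₂_eq_sum_range, ← hn, Finset.sum_range_succ, hPmMonic.coeff_natDegree,
      _root_.map_one] at h0
    rw [one_mul] at h0
    linear_combination h0
  have hcoef : ∀ j, ∃ cp : R[X], aeval x cp = algebraMap A S (Pm.coeff j) := by
    intro j
    exact hA _ (Pm.coeff j).2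
  choose Cp hCp using hcoef
  set d := (range n).sup fun j => (Cp j).natDegree with hd
  set g : ℕ → R[X] := fun i => C (Ph.coeff i) * X - C (V.coeff i) with hg
  set φ : ℕ → R[X] := fun l =>
    (if l = 0 then X ^ n else 0) + ∑ j ∈ range n, C ((Cp j).coeff l) * X ^ j with hφ
  set GX : Polynomial R[X] := ∑ i ∈ range (k + 1), C (g i) * X ^ i with hGX
  set FX : Polynomial R[X] := ∑ l ∈ range (d + 1), C (φ l) * X ^ l with hFX
  have hgdeg : ∀ i, (g i).natDegree ≤ 1 := by
    intro i
    refine (natDegree_sub_le _ _).trans (max_le ?_ ?_)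
    · exact natDegree_mul_le.trans (by simp [natDegree_X_le])
    · simp
  have hφdeg : ∀ l, (φ l).natDegree ≤ n := by
    intro l
    refine (natDegree_add_le _ _).trans (max_le ?_ ?_)
    · split_ifs
      · exact natDegree_X_pow_le n
      · simp
    · apply natDegree_sum_le_of_forall_le
      intro j hj
      rw [mem_range] at hj
      exact (natDegree_C_mul_X_pow_le _ _).trans (by omega)
  have hφtop : ∀ l, 1 ≤ l → (φ l).coeff n = 0 := by
    intro l hl
    rw [hφ]
    simp only [if_neg (by omega : ¬ l = 0), zero_add, finset_sum_coeff]
    apply Finset.sum_eq_zero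
    intro j hj
    rw [mem_range] at hj
    have : n ≠ j := by omega
    simp [coeff_C_mul, coeff_X_pow, this]
  have hφ0top : (φ 0).coeff n = 1 := by
    rw [hφ]
    simp only [if_pos rfl, coeff_add, coeff_X_pow, if_pos rfl, finset_sum_coeff]
    have h0 : (∑ j ∈ range n, ((C ((Cp j).coeff 0) * X ^ j).coeff n)) = 0 := by
      apply Finset.sum_eq_zero
      intro j hj
      rw [mem_range] at hj
      have : n ≠ j := by omega
      simp [coeff_C_mul, coeff_X_pow, this]
    rw [h0, add_zero]
    simp
  have hGXc : ∀ m, GX.coeff m = if m < k + 1 then g m else 0 := by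
    intro m
    rw [hGX, finset_sum_coeff]
    split_ifs with h
    · rw [Finset.sum_eq_single m]
      · simp
      · intro i _ hne
        simp [coeff_C_mul, coeff_X_pow, Ne.symm hne]
      · intro hm
        exact absurd (mem_range.2 h) hm
    · apply Finset.sum_eq_zero
      intro i hi
      rw [mem_range] at hi
      have : m ≠ i := by omega
      simp [coeff_C_mul, coeff_X_pow, this]
  have hFXc : ∀ m, FX.coeff m = if m < d + 1 then φ m else 0 := by
    intro m
    rw [hFX, finset_sum_coeff]
    split_ifs with h
    · rw [Finset.sum_eq_single m]
      · simp
      · intro i _ hne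
        simp [coeff_C_mul, coeff_X_pow, Ne.symm hne]
      · intro hm
        exact absurd (mem_range.2 h) hm
    · apply Finset.sum_eq_zero
      intro i hi
      rw [mem_range] at hi
      have : m ≠ i := by omega
      simp [coeff_C_mul, coeff_X_pow, this]
  have hGXdeg : GX.natDegree ≤ k := by
    apply natDegree_sum_le_of_forall_le
    intro i hi
    rw [mem_range] at hi
    exact (natDegree_C_mul_X_pow_le _ _).trans (by omega)
  have hFXdeg : FX.natDegree ≤ d := by
    apply natDegree_sum_le_of_forall_le
    intro l hl
    rw [mem_range] at hl
    exact (natDegree_C_mul_X_pow_le _ _).trans (by omega)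
  set Ev : Polynomial R[X] →+* S :=
    eval₂RingHom ((aeval t₂ : R[X] →ₐ[R] S) : R[X] →+* S) x with hEv
  have hEvCX : ∀ (p : R[X]) (i : ℕ), Ev (C p * X ^ i) = aeval t₂ p * x ^ i := by
    intro p i
    simp only [hEv, coe_eval₂RingHom, eval₂_mul, eval₂_C, eval₂_pow, eval₂_X,
      AlgHom.coe_toRingHom, RingHom.coe_coe]
  have hGX0 : Ev GX = 0 := by
    rw [hGX, map_sum]
    have hterm : ∀ i ∈ range (k + 1), Ev (C (g i) * X ^ i)
        = (algebraMap R S (Ph.coeff i) * t₂ - algebraMap R S (V.coeff i)) * x ^ i := by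
      intro i _
      rw [hEvCX]
      congr 1
      simp only [hg]
      rw [map_sub, _root_.map_mul, aeval_C, aeval_X, aeval_C]
    rw [Finset.sum_congr rfl hterm]
    have h1 : aeval x Ph = ∑ i ∈ range (k + 1), algebraMap R S (Ph.coeff i) * x ^ i := by
      rw [aeval_eq_sum_range' (Nat.lt_succ_of_le hPhdeg) x]
      simp [Algebra.smul_def]
    have h2 : aeval x V = ∑ i ∈ range (k + 1), algebraMap R S (V.coeff i) * x ^ i := by
      rw [aeval_eq_sum_range' (Nat.lt_succ_of_le hVdeg) x]
      simp [Algebra.smul_def]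
    have h3 : (∑ i ∈ range (k + 1),
          (algebraMap R S (Ph.coeff i) * t₂ - algebraMap R S (V.coeff i)) * x ^ i)
        = t₂ * aeval x Ph - aeval x V := by
      rw [h1, h2, Finset.mul_sum, ← Finset.sum_sub_distrib]
      apply Finset.sum_congr rfl
      intro i _
      ring
    rw [h3, hrel, sub_self]
  have hFX0 : Ev FX = 0 := by
    rw [hFX, map_sum]
    have hterm : ∀ l ∈ range (d + 1), Ev (C (φ l) * X ^ l)
        = ((if l = 0 then t₂ ^ n else 0)
            + ∑ j ∈ range n, algebraMap R S ((Cp j).coeff l) * t₂ ^ j) * x ^ l := by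
      intro l _
      rw [hEvCX]
      congr 1
      simp only [hφ]
      rw [map_add, map_sum]
      congr 1
      · split_ifs
        · rw [_root_.map_pow, aeval_X]
        · rw [map_zero]
      · apply Finset.sum_congr rfl
        intro j _
        rw [_root_.map_mul, aeval_C, _root_.map_pow, aeval_X]
    rw [Finset.sum_congr rfl hterm]
    have e1 : ∀ l ∈ range (d + 1),
        ((if l = 0 then t₂ ^ n else 0)
            + ∑ j ∈ range n, algebraMap R S ((Cp j).coeff l) * t₂ ^ j) * x ^ l
        = (if l = 0 then t₂ ^ n else 0) * x ^ l
            + ∑ j ∈ range n, (algebraMap R S ((Cp j).coeff l) * x ^ l) * t₂ ^ j := by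
      intro l _
      rw [add_mul, Finset.sum_mul]
      congr 1
      apply Finset.sum_congr rfl
      intro j _
      ring
    rw [Finset.sum_congr rfl e1, Finset.sum_add_distrib]
    have hfirst : (∑ l ∈ range (d + 1), (if l = 0 then t₂ ^ n else 0) * x ^ l) = t₂ ^ n := by
      rw [Finset.sum_eq_single 0]
      · simp
      · intro l _ hne
        simp [hne]
      · intro h
        exact absurd (mem_range.2 (by omega)) h
    have hswap : (∑ l ∈ range (d + 1), ∑ j ∈ range n,
          (algebraMap R S ((Cp j).coeff l) * x ^ l) * t₂ ^ j)
        = ∑ j ∈ range n, (∑ l ∈ range (d + 1), algebraMap R S ((Cp j).coeff l) * x ^ l) * t₂ ^ j := by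
      rw [Finset.sum_comm]
      apply Finset.sum_congr rfl
      intro j _
      rw [Finset.sum_mul]
    rw [hfirst, hswap]
    have hsec : ∀ j ∈ range n,
        (∑ l ∈ range (d + 1), algebraMap R S ((Cp j).coeff l) * x ^ l) * t₂ ^ j
        = algebraMap A S (Pm.coeff j) * t₂ ^ j := by
      intro j hj
      congr 1
      have hdj : (Cp j).natDegree < d + 1 :=
        Nat.lt_succ_of_le (Finset.le_sup (f := fun j => (Cp j).natDegree) hj)
      rw [← hCp j, aeval_eq_sum_range' hdj x]
      simp [Algebra.smul_def]
    rw [Finset.sum_congr rfl hsec]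
    exact hsum0
  set sh : ℕ → ℕ := fun r => if r < d then d - 1 - r else d + k - 1 - r with hsh
  set Wr : ℕ → Polynomial R[X] := fun r => if r < d then GX else FX with hWr
  set M : Matrix (Fin (d + k)) (Fin (d + k)) R[X] :=
    Matrix.of fun r c => (X ^ sh (r : ℕ) * Wr (r : ℕ)).coeff (d + k - 1 - (c : ℕ)) with hM
  have hWdeg : ∀ r : Fin (d + k), (X ^ sh (r : ℕ) * Wr (r : ℕ)).natDegree ≤ d + k - 1 := by
    intro r
    have hr := r.isLt
    refine natDegree_mul_le.trans ?_
    rcases lt_or_ge (r : ℕ) d with h | h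
    · simp only [hsh, hWr, if_pos h]
      have h1 := natDegree_X_pow_le (R := R[X]) (d - 1 - (r : ℕ))
      omega
    · simp only [hsh, hWr, if_neg (by omega : ¬ (r : ℕ) < d)]
      have h1 := natDegree_X_pow_le (R := R[X]) (d + k - 1 - (r : ℕ))
      omega
  set w : Fin (d + k) → S := fun c => x ^ (d + k - 1 - (c : ℕ)) with hw
  have hrow : ∀ Qp : Polynomial R[X], Qp.natDegree ≤ d + k - 1 →
      (∑ c : Fin (d + k), aeval t₂ (Qp.coeff (d + k - 1 - (c : ℕ))) * x ^ (d + k - 1 - (c : ℕ)))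
        = Ev Qp := by
    intro Qp hQp
    have hlt : Qp.natDegree < d + k := by omega
    rw [hEv, coe_eval₂RingHom, eval₂_eq_sum_range' _ hlt x]
    simp only [RingHom.coe_coe]
    rw [Fin.sum_univ_eq_sum_range
        (fun c => aeval t₂ (Qp.coeff (d + k - 1 - c)) * x ^ (d + k - 1 - c)) (d + k),
      ← Finset.sum_range_reflect (fun i => aeval t₂ (Qp.coeff i) * x ^ i) (d + k)]
  set Mt : Matrix (Fin (d + k)) (Fin (d + k)) S := Matrix.of fun r c => aeval t₂ (M r c) with hMtd
  have hMtw : Mt.mulVec w = 0 := by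
    funext r
    have h1 := hrow (X ^ sh (r : ℕ) * Wr (r : ℕ)) (hWdeg r)
    have h2 : Mt.mulVec w r = Ev (X ^ sh (r : ℕ) * Wr (r : ℕ)) := by
      rw [← h1]
      rfl
    show Mt.mulVec w r = 0
    rw [h2, _root_.map_mul, _root_.map_pow]
    have hX : Ev X = x := by rw [hEv, coe_eval₂RingHom, eval₂_X]
    rw [hX]
    rcases lt_or_ge (r : ℕ) d with h | h
    · simp only [hWr, if_pos h, hGX0, mul_zero]
    · simp only [hWr, if_neg (by omega : ¬ (r : ℕ) < d), hFX0, mul_zero]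
  have hdetMt : Mt.det = 0 := by
    have h2 : Mt.det • w = 0 := by
      have h3 : Mt.det • w = (Mt.adjugate * Mt).mulVec w := by
        rw [Matrix.adjugate_mul, Matrix.smul_mulVec, Matrix.one_mulVec]
      rw [h3, ← Matrix.mulVec_mulVec, hMtw, Matrix.mulVec_zero]
    have h4 := congrFun h2 ⟨d + k - 1, by omega⟩
    simp only [Pi.smul_apply, smul_eq_mul, Pi.zero_apply, hw] at h4
    rw [Nat.sub_self, pow_zero, mul_one] at h4
    exact h4
  have hdet0 : aeval t₂ M.det = 0 := by
    calc aeval t₂ M.det = (M.map (aeval t₂ : R[X] →ₐ[R] S)).det := AlgHom.map_det _ M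
    _ = Mt.det := rfl
    _ = 0 := hdetMt
  set b : ℕ → ℕ := fun r => if r < d then 1 else n with hb
  have hMdeg : ∀ r c : Fin (d + k), (M r c).natDegree ≤ b (r : ℕ) := by
    intro r c
    rcases lt_or_ge (r : ℕ) d with h | h
    · simp only [hM, hb, hsh, hWr, Matrix.of_apply, if_pos h]
      rw [coeff_X_pow_mul']
      split_ifs with h2
      · rw [hGXc]
        split_ifs with h3
        · exact hgdeg _
        · simp
      · simp
    · simp only [hM, hb, hsh, hWr, Matrix.of_apply, if_neg (by omega : ¬ (r : ℕ) < d)]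
      rw [coeff_X_pow_mul']
      split_ifs with h2
      · rw [hFXc]
        split_ifs with h3
        · exact hφdeg _
        · simp
      · simp
  have hbsum : (∑ r : Fin (d + k), b (r : ℕ)) = d + k * n := by
    rw [Fin.sum_univ_eq_sum_range (fun r => b r) (d + k), range_eq_Ico,
      ← Finset.sum_Ico_consecutive _ (Nat.zero_le d) (by omega : d ≤ d + k)]
    have e1 : ∀ i ∈ Finset.Ico 0 d, b i = 1 := by
      intro i hi
      simp only [hb]
      rw [if_pos (Finset.mem_Ico.1 hi).2]
    have e2 : ∀ i ∈ Finset.Ico d (d + k), b i = n := by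
      intro i hi
      simp only [hb]
      rw [if_neg (by have := (Finset.mem_Ico.1 hi).1; omega)]
    rw [Finset.sum_congr rfl e1, Finset.sum_congr rfl e2, Finset.sum_const, Finset.sum_const,
      Nat.card_Ico, Nat.card_Ico]
    simp only [smul_eq_mul, Nat.sub_zero, mul_one]
    have : d + k - d = k := by omega
    rw [this]
  have hcoeffN : M.det.coeff (d + k * n) = aR ^ d := by
    rw [Matrix.det_apply, finset_sum_coeff]
    have hterm : ∀ σ : Equiv.Perm (Fin (d + k)),
        (Equiv.Perm.sign σ • ∏ i, M (σ i) i).coeff (d + k * n)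
          = Equiv.Perm.sign σ • ∏ i : Fin (d + k), (M (σ i) i).coeff (b ((σ i) : ℕ)) := by
      intro σ
      rw [coeff_smul]
      congr 1
      have hsumb : (∑ i : Fin (d + k), b ((σ i) : ℕ)) = d + k * n := by
        rw [Equiv.sum_comp σ (fun i : Fin (d + k) => b (i : ℕ))]
        exact hbsum
      rw [← hsumb, coeff_prod_bnd Finset.univ _ _ (fun i _ => hMdeg (σ i) i)]
    rw [Finset.sum_congr rfl (fun σ _ => hterm σ)]
    have hdetM' : (∑ σ : Equiv.Perm (Fin (d + k)),
          Equiv.Perm.sign σ • ∏ i : Fin (d + k), (M (σ i) i).coeff (b ((σ i) : ℕ)))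
        = (Matrix.of fun r c : Fin (d + k) => (M r c).coeff (b (r : ℕ))).det := by
      rw [Matrix.det_apply]
      rfl
    rw [hdetM']
    have htri : (Matrix.of fun r c : Fin (d + k) => (M r c).coeff (b (r : ℕ))).BlockTriangular
        id := by
      intro r c hrc
      have hcr : (c : ℕ) < (r : ℕ) := hrc
      simp only [Matrix.of_apply, hM, hsh, hWr, hb]
      rcases lt_or_ge (r : ℕ) d with h | h
      · simp only [if_pos h]
        have hdeg2 : ((X : Polynomial R[X]) ^ (d - 1 - (r : ℕ)) * GX).natDegree
            < d + k - 1 - (c : ℕ) := by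
          have h1 := natDegree_X_pow_le (R := R[X]) (d - 1 - (r : ℕ))
          have h3 := natDegree_mul_le (p := (X : Polynomial R[X]) ^ (d - 1 - (r : ℕ))) (q := GX)
          have hc := c.isLt
          omega
        rw [coeff_eq_zero_of_natDegree_lt hdeg2, coeff_zero]
      · simp only [if_neg (by omega : ¬ (r : ℕ) < d)]
        rw [coeff_X_pow_mul',
          if_pos (by have := r.isLt; omega : d + k - 1 - (r : ℕ) ≤ d + k - 1 - (c : ℕ))]
        rw [hFXc]
        have hrc2 : d + k - 1 - (c : ℕ) - (d + k - 1 - (r : ℕ)) = (r : ℕ) - (c : ℕ) := by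
          have := r.isLt
          omega
        rw [hrc2]
        split_ifs with h3
        · exact hφtop _ (by omega)
        · simp
    rw [Matrix.det_of_upperTriangular htri]
    have hdiag : ∀ r : Fin (d + k),
        (Matrix.of fun r c : Fin (d + k) => (M r c).coeff (b (r : ℕ))) r r
          = if (r : ℕ) < d then aR else 1 := by
      intro r
      simp only [Matrix.of_apply, hM, hsh, hWr, hb]
      rcases lt_or_ge (r : ℕ) d with h | h
      · simp only [if_pos h]
        rw [coeff_X_pow_mul', if_pos (by have := r.isLt; omega)]
        have h4 : d + k - 1 - (r : ℕ) - (d - 1 - (r : ℕ)) = k := by have := r.isLt; omega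
        rw [h4, hGXc, if_pos (by omega)]
        simp only [hg]
        rw [coeff_sub, coeff_C_mul, coeff_X_one, mul_one, coeff_C,
          if_neg (by omega : ¬ (1 : ℕ) = 0), sub_zero, hPhk]
      · simp only [if_neg (by omega : ¬ (r : ℕ) < d)]
        rw [coeff_X_pow_mul', if_pos (le_refl _), Nat.sub_self, hFXc, if_pos (by omega), hφ0top]
    rw [Finset.prod_congr rfl (fun r _ => hdiag r)]
    rw [Fin.prod_univ_eq_prod_range (fun r => if r < d then aR else 1) (d + k), range_eq_Ico,
      ← Finset.prod_Ico_consecutive _ (Nat.zero_le d) (by omega : d ≤ d + k),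
      Finset.prod_congr rfl (fun i hi => if_pos (Finset.mem_Ico.1 hi).2),
      Finset.prod_congr rfl
        (fun i hi => if_neg (by have := (Finset.mem_Ico.1 hi).1; omega : ¬ i < d)),
      Finset.prod_const, Finset.prod_const, one_pow, mul_one, Nat.card_Ico, Nat.sub_zero]
  have hdegH : M.det.natDegree ≤ d + k * n := by
    rw [Matrix.det_apply]
    apply natDegree_sum_le_of_forall_le
    intro σ _
    rw [Units.smul_def, zsmul_eq_mul]
    refine natDegree_mul_le.trans ?_
    rw [natDegree_intCast, zero_add]
    refine (natDegree_prod_le _ _).trans ?_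
    have h5 : (∑ i : Fin (d + k), (M (σ i) i).natDegree) ≤ ∑ i : Fin (d + k), b ((σ i) : ℕ) :=
      Finset.sum_le_sum fun i _ => hMdeg (σ i) i
    refine h5.trans ?_
    rw [Equiv.sum_comp σ (fun i : Fin (d + k) => b (i : ℕ))]
    exact hbsum.le
  by_cases haRd : aR ^ d = 0
  · refine ⟨0, Subalgebra.zero_mem _, d, ?_⟩
    have h0 : algebraMap R S (a (Fin.last k)) ^ d * t - 0 = 0 := by
      rw [← haR, ← _root_.map_pow, haRd, map_zero, zero_mul, sub_zero]
    rw [h0]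
    exact isIntegral_zero
  · have hdegN : M.det.natDegree = d + k * n :=
      le_antisymm hdegH (le_natDegree_of_ne_zero (by rw [hcoeffN]; exact haRd))
    have hlc : M.det.leadingCoeff = aR ^ d := by rw [leadingCoeff, hdegN, hcoeffN]
    have hH0 : M.det ≠ 0 := fun h => haRd (by rw [← hcoeffN, h, coeff_zero])
    have hint : IsIntegral R (algebraMap R S (aR ^ d) * t₂) := by
      refine ⟨M.det.integralNormalization, monic_integralNormalization hH0, ?_⟩
      have h5 := integralNormalization_aeval_eq_zero hdet0
        (fun r hr => hinj (by rw [hr, map_zero]))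
      rw [hlc] at h5
      rwa [aeval_def] at h5
    refine ⟨algebraMap R S (aR ^ d) * q₁,
      Subalgebra.mul_mem _ (Subalgebra.algebraMap_mem _ _) hq₁A, d + e, ?_⟩
    have heq : algebraMap R S (a (Fin.last k)) ^ (d + e) * t - algebraMap R S (aR ^ d) * q₁
        = algebraMap R S (aR ^ d) * t₂ := by
      rw [ht₂def, haS, ← haR, _root_.map_pow]
      ring
    rw [heq]
    exact hint

end main
end

section
/- Let R ⊆ S be commutative rings and x, t, y, s ∈ S. If t and t·y are integral over the subring R[x], and s and s·x are integral over R, then there exists N ∈ ℕ such that, setting w = s^N·t, the elements w, w·x, and w·y are all integral over R. -/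
open Polynomial Finset

section aux

variable {R S : Type*} [CommRing R] [CommRing S] [Algebra R S]

/-- For any element of `R[x]`, a big enough power of `s` multiplies it into `R[s, s*x]`. -/
lemma aux_mem {x s : S} {c : S} (hc : c ∈ Algebra.adjoin R ({x} : Set S)) :
    ∃ d : ℕ, ∀ e ≥ d, s ^ e * c ∈ Algebra.adjoin R ({s, s * x} : Set S) := by
  set A := Algebra.adjoin R ({s, s * x} : Set S) with hA
  have hsA : s ∈ A := Algebra.subset_adjoin (by simp)
  have hsxA : s * x ∈ A := Algebra.subset_adjoin (by simp)
  induction hc using Algebra.adjoin_induction with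
  | mem z hz =>
    refine ⟨1, fun e he => ?_⟩
    simp only [Set.mem_singleton_iff] at hz
    rw [hz]
    obtain ⟨e', rfl⟩ : ∃ e', e = e' + 1 := ⟨e - 1, by omega⟩
    have h : s ^ (e' + 1) * x = s ^ e' * (s * x) := by ring
    rw [h]
    exact mul_mem (pow_mem hsA e') hsxA
  | algebraMap r =>
    exact ⟨0, fun e _ => mul_mem (pow_mem hsA e) (Subalgebra.algebraMap_mem A r)⟩
  | add z w hz hw ihz ihw =>
    obtain ⟨d1, h1⟩ := ihz
    obtain ⟨d2, h2⟩ := ihw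
    refine ⟨max d1 d2, fun e he => ?_⟩
    rw [mul_add]
    exact add_mem (h1 e (le_trans (le_max_left _ _) he))
      (h2 e (le_trans (le_max_right _ _) he))
  | mul z w hz hw ihz ihw =>
    obtain ⟨d1, h1⟩ := ihz
    obtain ⟨d2, h2⟩ := ihw
    refine ⟨d1 + d2, fun e he => ?_⟩
    obtain ⟨f, rfl⟩ : ∃ f, e = d1 + f := ⟨e - d1, by omega⟩
    have heq : s ^ (d1 + f) * (z * w) = (s ^ d1 * z) * (s ^ f * w) := by
      rw [pow_add]; ring
    rw [heq]
    exact mul_mem (h1 d1 le_rfl) (h2 f (by omega))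

set_option synthInstance.maxHeartbeats 400000 in
/-- If `u` is integral over `R[x]`, then `s^N * u` is integral over `R[s, s*x]`
for all big enough `N`. -/
lemma aux_integral {x s u : S} (hu : IsIntegral (Algebra.adjoin R ({x} : Set S)) u) :
    ∃ N₀ : ℕ, ∀ N ≥ N₀, IsIntegral (Algebra.adjoin R ({s, s * x} : Set S)) (s ^ N * u) := by
  set A := Algebra.adjoin R ({s, s * x} : Set S) with hA
  rcases subsingleton_or_nontrivial S with hS | hS
  · exact ⟨0, fun N _ => ⟨1, monic_one, Subsingleton.elim _ _⟩⟩
  haveI hnt₁ : Nontrivial ↥(Algebra.adjoin R ({x} : Set S)) :=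
    ⟨⟨0, 1, fun h => zero_ne_one (α := S) (congrArg Subtype.val h)⟩⟩
  haveI hnt₂ : Nontrivial ↥A :=
    ⟨⟨0, 1, fun h => zero_ne_one (α := S) (congrArg Subtype.val h)⟩⟩
  obtain ⟨p₀, hp₀monic, hp₀⟩ := hu
  set p := p₀ * X with hpdef
  have hpmonic : p.Monic := hp₀monic.mul monic_X
  have hp₀' : aeval u p₀ = 0 := hp₀
  have hpeval : aeval u p = 0 := by
    rw [hpdef, map_mul, hp₀', zero_mul]
  set n := p.natDegree with hn
  have hnpos : 0 < n := by
    rw [hn, hpdef, hp₀monic.natDegree_mul monic_X, natDegree_X]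
    omega
  have hcoef : ∀ i : ℕ, ∃ d : ℕ, ∀ e ≥ d,
      s ^ e * ((p.coeff i : S)) ∈ A := fun i => aux_mem (p.coeff i).2
  choose D hD using hcoef
  set d := (Finset.range (n + 1)).sup D with hd
  refine ⟨d, fun N hN => ?_⟩
  have hmem : ∀ i, i < n → s ^ (N * (n - i)) * ((p.coeff i : S)) ∈ A := by
    intro i hi
    refine hD i _ ?_
    have h1 : D i ≤ d := Finset.le_sup (Finset.mem_range.mpr (by omega))
    have h2 : N ≤ N * (n - i) := Nat.le_mul_of_pos_right N (by omega)
    omega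
  set a : ℕ → A := fun i => if h : i < n then ⟨s ^ (N * (n - i)) * ((p.coeff i : S)), hmem i h⟩
    else 0 with ha
  set q : Polynomial A := X ^ n + ∑ i ∈ Finset.range n, C (a i) * X ^ i with hq
  have hqmonic : q.Monic := by
    apply (monic_X_pow n).add_of_left
    rw [degree_X_pow]
    refine lt_of_le_of_lt (degree_sum_le _ _) ?_
    rw [Finset.sup_lt_iff (by exact_mod_cast WithBot.bot_lt_coe n)]
    intro i hi
    refine lt_of_le_of_lt (degree_C_mul_X_pow_le _ _) ?_
    exact_mod_cast Finset.mem_range.mp hi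
  have key : aeval (s ^ N * u) q = s ^ (N * n) * aeval u p := by
    have hpe : aeval u p = ∑ i ∈ Finset.range (n + 1), (p.coeff i : S) * u ^ i := by
      rw [aeval_eq_sum_range]
      exact Finset.sum_congr rfl fun i _ => by rw [Algebra.smul_def]; rfl
    have hqe : aeval (s ^ N * u) q
        = (s ^ N * u) ^ n + ∑ i ∈ Finset.range n, ((a i : S)) * (s ^ N * u) ^ i := by
      rw [hq]
      simp only [map_add, map_pow, map_sum, map_mul, aeval_X, aeval_C]
      rfl
    have hc1 : ((p.coeff n : S)) = 1 := by
      rw [hn, hpmonic.coeff_natDegree, OneMemClass.coe_one]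
    have hsum : ∑ i ∈ Finset.range n, ((a i : S)) * (s ^ N * u) ^ i
        = s ^ (N * n) * ∑ i ∈ Finset.range n, (p.coeff i : S) * u ^ i := by
      rw [Finset.mul_sum]
      refine Finset.sum_congr rfl fun i hi => ?_
      have hi' := Finset.mem_range.mp hi
      have ha' : ((a i : S)) = s ^ (N * (n - i)) * ((p.coeff i : S)) := by
        rw [ha]; simp only [dif_pos hi']
      rw [ha', mul_pow, ← pow_mul,
        show N * n = N * (n - i) + N * i from by
          rw [← Nat.mul_add, Nat.sub_add_cancel hi'.le],
        pow_add]
      ring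
    have hxn : (s ^ N * u) ^ n = s ^ (N * n) * u ^ n := by
      rw [mul_pow, ← pow_mul]
    rw [hqe, hpe, Finset.sum_range_succ, hc1, one_mul, mul_add, hsum, hxn]
    ring
  refine ⟨q, hqmonic, ?_⟩
  show aeval (s ^ N * u) q = 0
  rw [key, hpeval, mul_zero]

end aux

/-- **Glueing of integral extensions.** If `t, t·y` are integral over `R[x]` and
`s, s·x` are integral over `R`, then for `N` big enough, `w = s^N·t` satisfies that
`w, w·x, w·y` are integral over `R`. -/
theorem glueing_integral {R S : Type*} [CommRing R] [CommRing S] [Algebra R S]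
    (hinj : Function.Injective (algebraMap R S))
    (x t y s : S)
    (ht : IsIntegral (Algebra.adjoin R ({x} : Set S)) t)
    (hty : IsIntegral (Algebra.adjoin R ({x} : Set S)) (t * y))
    (hs : IsIntegral R s) (hsx : IsIntegral R (s * x)) :
    ∃ N : ℕ, IsIntegral R (s ^ N * t) ∧ IsIntegral R (s ^ N * t * x) ∧
      IsIntegral R (s ^ N * t * y) := by
  haveI hAint : Algebra.IsIntegral R (Algebra.adjoin R ({s, s * x} : Set S)) := by
    apply Algebra.IsIntegral.adjoin
    rintro z hz
    simp only [Set.mem_insert_iff, Set.mem_singleton_iff] at hz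
    rcases hz with rfl | rfl
    · exact hs
    · exact hsx
  obtain ⟨N₁, h₁⟩ := aux_integral (s := s) ht
  obtain ⟨N₂, h₂⟩ := aux_integral (s := s) hty
  set M := max N₁ N₂ with hM
  refine ⟨M + 1, ?_, ?_, ?_⟩
  · exact isIntegral_trans (R := R) _ (h₁ (M + 1) (by omega))
  · have hw : IsIntegral R (s ^ M * t) := isIntegral_trans (R := R) _ (h₁ M (by omega))
    have hmul := hw.mul hsx
    have heq : s ^ (M + 1) * t * x = (s ^ M * t) * (s * x) := by
      rw [pow_succ]; ring
    rwa [heq]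
  · have h := isIntegral_trans (R := R) _ (h₂ (M + 1) (by omega))
    rwa [← mul_assoc] at h
end

section
/- Let C be a commutative ring, D a reduced commutative C-algebra, and u, x ∈ D. Assume x is strongly transcendent over C in D, and that u and u·x are both integral over (the image of) C in D. Then u = 0. -/
/-- `x` is strongly transcendent over `C` in `D` if for every `u ∈ D` and all
`c₀,…,c_k ∈ C`, `u·(c₀ + c₁x + ⋯ + c_k x^k) = 0` implies `u·c_i = 0` for all `i`. -/
def StronglyTranscendent (C : Type*) {D : Type*} [CommRing C] [CommRing D] [Algebra C D]
    (x : D) : Prop :=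
  ∀ (u : D) (k : ℕ) (c : Fin (k + 1) → C),
    u * (∑ i : Fin (k + 1), algebraMap C D (c i) * x ^ (i : ℕ)) = 0 →
    ∀ i, u * algebraMap C D (c i) = 0

open Polynomial

/-- If `w * x = 0` then `w = 0`, from strong transcendence. -/
lemma StronglyTranscendent.eq_zero_of_mul_x {C D : Type*} [CommRing C] [CommRing D]
    [Algebra C D] {x : D} (hst : StronglyTranscendent C x) {w : D} (h : w * x = 0) :
    w = 0 := by
  have := hst w 1 ![0, 1] (by simpa [Fin.sum_univ_two] using h) 1
  simpa using this

lemma key_lemma {C D : Type*} [CommRing C] [CommRing D] [Algebra C D] [IsReduced D]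
    (x : D) (hst : StronglyTranscendent C x) :
    ∀ m : ℕ, ∀ u : D, IsIntegral C u → IsIntegral C (u * x) →
      ∀ q : C[X], q.Monic → q.natDegree ≤ m → u * aeval (u * x) q = 0 → u = 0 := by
  intro m
  induction m with
  | zero =>
    intro u hu hux q hq hdeg h
    have hq1 : q = 1 := hq.natDegree_eq_zero.mp (Nat.le_zero.mp hdeg)
    simpa [hq1] using h
  | succ m ih =>
    intro u hu hux q hq hdeg h
    rcases Nat.lt_or_ge q.natDegree (m + 1) with hlt | hge
    · exact ih u hu hux q hq (Nat.lt_succ_iff.mp hlt) h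
    have hdeq : q.natDegree = m + 1 := le_antisymm hdeg hge
    set r : C[X] := q.divX with hr
    have hrdeg : r.natDegree = m := by
      rw [hr, natDegree_divX_eq_natDegree_tsub_one, hdeq]
      omega

    have hrmonic : r.Monic := by
      unfold Polynomial.Monic Polynomial.leadingCoeff
      rw [hrdeg, hr, coeff_divX, ← hdeq]
      exact hq
    set d : C := q.coeff 0 with hd
    set e : D := algebraMap C D d with he
    set R : D := aeval (u * x) r with hR
    set w : D := u * R with hw
    -- basic relation : u * ((u*x) * R + e) = 0
    have hrel : u * ((u * x) * R + e) = 0 := by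
      have hqsplit : (aeval (u * x)) q = (u * x) * R + e := by
        have h0 := congrArg (fun t : C[X] => aeval (u * x) t) (X_mul_divX_add q)
        simp only [map_add, map_mul, aeval_X, aeval_C] at h0
        rw [hR, he, hd]
        exact h0.symm
      rw [hqsplit] at h
      exact h
    have hrel2 : u * (u * x) * R = -(u * e) := by
      rw [eq_neg_iff_add_eq_zero]
      calc u * (u * x) * R + u * e = u * ((u * x) * R + e) := by ring
      _ = 0 := hrel
    -- w is integral
    have hRint : IsIntegral C R := by
      have h1 : R ∈ Algebra.adjoin C {u * x} := Polynomial.aeval_mem_adjoin_singleton C (u * x)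
      have h2 : Algebra.adjoin C {u * x} ≤ integralClosure C D :=
        Algebra.adjoin_le (by simpa [mem_integralClosure_iff] using hux)
      exact h2 h1
    have hwint : IsIntegral C w := hu.mul hRint
    -- key identity
    have hkey : w * w * x = -e * w := by
      calc w * w * x = (u * (u * x) * R) * R := by rw [hw]; ring
      _ = -(u * e) * R := by rw [hrel2]
      _ = -e * w := by rw [hw]; ring
    have hpow : ∀ k : ℕ, w ^ (k + 1) * x ^ k = (-e) ^ k * w := by
      intro k
      induction k with
      | zero => simp
      | succ k ihk =>
        calc w ^ (k + 2) * x ^ (k + 1) = (w ^ (k + 1) * x ^ k) * (w * x) := by ring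
        _ = ((-e) ^ k * w) * (w * x) := by rw [ihk]
        _ = (-e) ^ k * (w * w * x) := by ring
        _ = (-e) ^ k * (-e * w) := by rw [hkey]
        _ = (-e) ^ (k + 1) * w := by ring
    -- integral relation for w
    obtain ⟨p, hpmonic, hp0⟩ := hwint
    set N : ℕ := p.natDegree with hN
    have haeval : (∑ i ∈ Finset.range (N + 1), algebraMap C D (p.coeff i) * w ^ i) = 0 := by
      have := Polynomial.aeval_eq_sum_range (p := p) w
      rw [aeval_def, hp0] at this
      simp_rw [Algebra.smul_def] at this
      exact this.symm
    -- the big relation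
    have hbig : w * (∑ i : Fin (N + 1),
        algebraMap C D (p.coeff (N - (i : ℕ)) * (-d) ^ (N - (i : ℕ))) * x ^ (i : ℕ)) = 0 := by
      rw [Fin.sum_univ_eq_sum_range (fun i => algebraMap C D (p.coeff (N - i) * (-d) ^ (N - i)) * x ^ i) (N+1)]
      rw [Finset.mul_sum]
      have step : ∀ j ∈ Finset.range (N + 1),
          w * (algebraMap C D (p.coeff (N - j) * (-d) ^ (N - j)) * x ^ j)
          = algebraMap C D (p.coeff (N - j)) * w ^ (N - j) * (w * x ^ N) := by
        intro j hj
        have hjle : j ≤ N := Nat.lt_succ_iff.mp (Finset.mem_range.mp hj)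
        have hxsplit : x ^ N = x ^ (N - j) * x ^ j := by
          rw [← pow_add, Nat.sub_add_cancel hjle]
        have halg : algebraMap C D ((-d) ^ (N - j)) = (-e) ^ (N - j) := by
          rw [map_pow, map_neg, he]
        calc w * (algebraMap C D (p.coeff (N - j) * (-d) ^ (N - j)) * x ^ j)
            = algebraMap C D (p.coeff (N - j)) * (((-e) ^ (N - j) * w) * x ^ j) := by
              rw [map_mul, halg]; ring
          _ = algebraMap C D (p.coeff (N - j)) * ((w ^ (N - j + 1) * x ^ (N - j)) * x ^ j) := by
              rw [hpow (N - j)]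
          _ = algebraMap C D (p.coeff (N - j)) * w ^ (N - j) * (w * x ^ N) := by
              rw [hxsplit]; ring
      rw [Finset.sum_congr rfl step]
      have hreflect : ∑ j ∈ Finset.range (N + 1),
          algebraMap C D (p.coeff (N - j)) * w ^ (N - j) * (w * x ^ N)
          = ∑ i ∈ Finset.range (N + 1), algebraMap C D (p.coeff i) * w ^ i * (w * x ^ N) := by
        have := Finset.sum_range_reflect
          (fun i => algebraMap C D (p.coeff i) * w ^ i * (w * x ^ N)) (N + 1)
        simpa [Nat.succ_sub_one] using this
      rw [hreflect, ← Finset.sum_mul, haeval, zero_mul]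
    -- apply strong transcendence at i = 0
    have hzero := hst w N (fun i => p.coeff (N - (i : ℕ)) * (-d) ^ (N - (i : ℕ))) hbig 0
    have hcoeffN : p.coeff (N - (0 : Fin (N+1)) : ℕ) = 1 := by
      simpa [hN] using hpmonic.leadingCoeff
    rw [show ((0 : Fin (N+1)) : ℕ) = 0 from rfl] at hzero
    simp only [Nat.sub_zero] at hzero
    rw [show p.coeff N = 1 from hpmonic, one_mul, map_pow, map_neg, ← he] at hzero
    -- w * (-e)^N = 0, hence e * w nilpotent hence zero
    have hew : e * w = 0 := by
      have hnil : ((-e) * w) ^ (N + 1) = 0 := by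
        calc ((-e) * w) ^ (N + 1) = (-e) * ((w * (-e) ^ N) * w ^ N) := by ring
          _ = 0 := by rw [hzero]; ring
      have hnegew : (-e) * w = 0 := IsReduced.eq_zero _ ⟨N + 1, hnil⟩
      have : -(e * w) = 0 := by rw [← neg_mul]; exact hnegew
      exact neg_eq_zero.mp this
    -- (w*x)^2 = 0
    have hwx : w * x = 0 := by
      have : (w * x) ^ 2 = 0 := by
        calc (w * x) ^ 2 = (w * w * x) * x := by ring
          _ = (-e * w) * x := by rw [hkey]
          _ = -(e * w) * x := by ring
          _ = 0 := by rw [hew]; ring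
      exact IsReduced.eq_zero _ ⟨2, this⟩
    have hw0 : w = 0 := hst.eq_zero_of_mul_x hwx
    -- recurse
    exact ih u hu hux r hrmonic (le_of_eq hrdeg) (by rw [← hR, ← hw]; exact hw0)

/-- If `D` is a reduced `C`-algebra, `x` is strongly transcendent over `C` in `D`,
and `u, u·x` are integral over `C`, then `u = 0`. -/
theorem eq_zero_of_stronglyTranscendent {C D : Type*} [CommRing C] [CommRing D]
    [Algebra C D] [IsReduced D] (u x : D)
    (hst : StronglyTranscendent C x)
    (hu : IsIntegral C u) (hux : IsIntegral C (u * x)) :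
    u = 0 := by
  obtain ⟨q, hqmonic, hq0⟩ := id hux
  refine key_lemma x hst q.natDegree u hu hux q hqmonic le_rfl ?_
  rw [aeval_def, hq0, mul_zero]
end

section
/- Let C be a commutative ring, D a reduced commutative C-algebra, and x ∈ D strongly transcendent over C in D. Let C₁ be a subring of D such that every element of C₁ is integral over (the image of) C. Then x is strongly transcendent over C₁ in D, i.e., for every u ∈ D and all c₀,…,c_k ∈ C₁, the equality u·(c₀ + c₁·x + ⋯ + c_k·x^k) = 0 in D implies u·c_i = 0 in D for all i. -/
open Polynomial

/-- In a reduced ring, every element of a minimal prime is annihilated by some element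
outside the prime. -/
lemma exists_annihilator_of_mem_minimalPrime {D : Type*} [CommRing D] [IsReduced D]
    {p : Ideal D} (hp : p ∈ minimalPrimes D) {y : D} (hy : y ∈ p) :
    ∃ s : D, s ∉ p ∧ s * y = 0 := by
  haveI hPrime : p.IsPrime := hp.1.1
  have h1 : IsNilpotent (algebraMap D (Localization p.primeCompl) y) := by
    haveI := Ring.KrullDimLE.of_isLocalization p hp (Localization p.primeCompl)
    rw [Ring.KrullDimLE.isNilpotent_iff_mem_maximalIdeal]
    exact (IsLocalization.AtPrime.to_map_mem_maximal_iff _ p y).mpr hy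
  obtain ⟨n, hn⟩ := h1
  rw [← map_pow, IsLocalization.map_eq_zero_iff p.primeCompl] at hn
  obtain ⟨s, hs⟩ := hn
  refine ⟨(s : D), s.2, ?_⟩
  have h2 : ((s : D) * y) ^ (n + 1) = ((s : D) ^ n * y) * ((s : D) * y ^ n) := by ring
  have h3 : IsNilpotent ((s : D) * y) := ⟨n + 1, by rw [h2, hs, mul_zero]⟩
  exact h3.eq_zero

/-- Every element of the subfield generated by a subring of a field has a nonzero
"denominator" in the subring. -/
lemma exists_denominator {K : Type*} [Field K] (S : Subring K) {t : K}
    (ht : t ∈ Subfield.closure (S : Set K)) :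
    ∃ s : K, s ∈ S ∧ s ≠ 0 ∧ s * t ∈ S := by
  induction ht using Subfield.closure_induction with
  | mem x hx => exact ⟨1, S.one_mem, one_ne_zero, by simpa⟩
  | one => exact ⟨1, S.one_mem, one_ne_zero, by simpa using S.one_mem⟩
  | add x y hx hy ihx ihy =>
      obtain ⟨s₁, hs₁, hs₁0, hst₁⟩ := ihx
      obtain ⟨s₂, hs₂, hs₂0, hst₂⟩ := ihy
      refine ⟨s₁ * s₂, S.mul_mem hs₁ hs₂, mul_ne_zero hs₁0 hs₂0, ?_⟩
      have : s₁ * s₂ * (x + y) = (s₁ * x) * s₂ + (s₂ * y) * s₁ := by ring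
      rw [this]
      exact S.add_mem (S.mul_mem hst₁ hs₂) (S.mul_mem hst₂ hs₁)
  | neg x hx ih =>
      obtain ⟨s, hsS, hs0, hst⟩ := ih
      exact ⟨s, hsS, hs0, by rw [mul_neg]; exact S.neg_mem hst⟩
  | inv x hx ih =>
      by_cases hx0 : x = 0
      · exact ⟨1, S.one_mem, one_ne_zero, by simp [hx0, S.zero_mem]⟩
      · obtain ⟨s, hsS, hs0, hst⟩ := ih
        refine ⟨s * x, hst, mul_ne_zero hs0 hx0, ?_⟩
        rw [mul_assoc, mul_inv_cancel₀ hx0, mul_one]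
        exact hsS
  | mul x y hx hy ihx ihy =>
      obtain ⟨s₁, hs₁, hs₁0, hst₁⟩ := ihx
      obtain ⟨s₂, hs₂, hs₂0, hst₂⟩ := ihy
      refine ⟨s₁ * s₂, S.mul_mem hs₁ hs₂, mul_ne_zero hs₁0 hs₂0, ?_⟩
      have : s₁ * s₂ * (x * y) = (s₁ * x) * (s₂ * y) := by ring
      rw [this]
      exact S.mul_mem hst₁ hst₂

/-- Common denominator for finitely many elements of the subfield generated by a subring. -/
lemma exists_common_denominator {K : Type*} [Field K] (S : Subring K) (n : ℕ) (t : ℕ → K)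
    (ht : ∀ j, j < n → t j ∈ Subfield.closure (S : Set K)) :
    ∃ s : K, s ∈ S ∧ s ≠ 0 ∧ ∀ j, j < n → s * t j ∈ S := by
  have h := fun j (hj : j < n) => exists_denominator S (ht j hj)
  choose f hfS hf0 hft using h
  let g : ℕ → K := fun j => if h : j < n then f j h else 1
  have hgS : ∀ j, g j ∈ S := by
    intro j; by_cases h : j < n <;> simp only [g, h, dif_pos, dif_neg, not_false_iff]
    · exact hfS j h
    · exact S.one_mem
  have hg0 : ∀ j, g j ≠ 0 := by
    intro j; by_cases h : j < n <;> simp only [g, h, dif_pos, dif_neg, not_false_iff]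
    · exact hf0 j h
    · exact one_ne_zero
  refine ⟨∏ j ∈ Finset.range n, g j, Subring.prod_mem S (fun j _ => hgS j),
    Finset.prod_ne_zero_iff.mpr (fun j _ => hg0 j), ?_⟩
  intro j hj
  rw [← Finset.mul_prod_erase (Finset.range n) g (Finset.mem_range.mpr hj)]
  have : g j * (∏ l ∈ (Finset.range n).erase j, g l) * t j
      = (∏ l ∈ (Finset.range n).erase j, g l) * (g j * t j) := by ring
  rw [this]
  refine S.mul_mem (Subring.prod_mem S (fun l _ => hgS l)) ?_
  have : g j = f j hj := by simp [g, hj]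
  rw [this]
  exact hft j hj

set_option maxHeartbeats 1000000
set_option synthInstance.maxHeartbeats 400000

/-- If `D` is a reduced `C`-algebra, `x` is strongly transcendent over `C` in `D`,
and `C₁` is a subring of `D` all of whose elements are integral over `C`, then
`x` is strongly transcendent over `C₁` in `D`. -/
theorem stronglyTranscendent_of_integral_subring {C D : Type*} [CommRing C] [CommRing D]
    [Algebra C D] [IsReduced D] (x : D)
    (hst : StronglyTranscendent C x)
    (C₁ : Subring D) (hC₁ : ∀ c ∈ C₁, IsIntegral C c) :
    ∀ (u : D) (k : ℕ) (c : Fin (k + 1) → D), (∀ i, c i ∈ C₁) →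
      u * (∑ i : Fin (k + 1), c i * x ^ (i : ℕ)) = 0 →
      ∀ i, u * c i = 0 := by
  intro u k c hc hrel i
  have key : ∀ p ∈ minimalPrimes D, u * c i ∈ p := by
    intro p hp
    haveI hPrime : p.IsPrime := hp.1.1
    letI K := FractionRing (D ⧸ p)
    set φ : D →+* K := (algebraMap (D ⧸ p) K).comp (Ideal.Quotient.mk p) with hφdef
    have hφker : ∀ y : D, φ y = 0 ↔ y ∈ p := by
      intro y
      rw [hφdef, RingHom.comp_apply,
        map_eq_zero_iff _ (IsFractionRing.injective (D ⧸ p) K),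
        Ideal.Quotient.eq_zero_iff_mem]
    by_cases hu : φ u = 0
    · exact (hφker _).mp (by rw [map_mul, hu, zero_mul])
    by_cases hci : φ (c i) = 0
    · exact (hφker _).mp (by rw [map_mul, hci, mul_zero])
    exfalso
    have hrelK : (∑ j : Fin (k + 1), φ (c j) * φ x ^ (j : ℕ)) = 0 := by
      have h := congrArg φ hrel
      rw [map_mul, map_zero, map_sum] at h
      simp only [map_mul, map_pow] at h
      exact (mul_eq_zero.mp h).resolve_left hu
    set ψ : C →+* K := φ.comp (algebraMap C D) with hψdef
    set S : Subring K := ψ.range with hSdef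
    set k₀ : Subfield K := Subfield.closure (S : Set K) with hk₀def
    have hψk₀ : ∀ a : C, ψ a ∈ k₀ := fun a => Subfield.subset_closure ⟨a, rfl⟩
    set ρ : C →+* ↥k₀ := ψ.codRestrict _ hψk₀ with hρdef
    have hint : ∀ j : Fin (k + 1), IsIntegral (↥k₀) (φ (c j)) := by
      intro j
      obtain ⟨P, hPm, hPe⟩ := hC₁ (c j) (hc j)
      refine ⟨P.map ρ, hPm.map ρ, ?_⟩
      rw [Polynomial.eval₂_map]
      have h1 : ((algebraMap ↥k₀ K).comp ρ) = ψ := RingHom.ext fun a => rfl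
      rw [h1]
      have h2 := congrArg φ hPe
      rw [map_zero, Polynomial.hom_eval₂] at h2
      exact h2
    set L : IntermediateField ↥k₀ K :=
      IntermediateField.adjoin ↥k₀ (Set.range fun j : Fin (k + 1) => φ (c j)) with hLdef
    haveI halg : Algebra.IsAlgebraic ↥k₀ ↥L :=
      IntermediateField.isAlgebraic_adjoin (by rintro _ ⟨j, rfl⟩; exact hint j)
    haveI hintL : Algebra.IsIntegral ↥k₀ ↥L := Algebra.isAlgebraic_iff_isIntegral.mp halg
    have hmemL : ∀ j : Fin (k + 1), φ (c j) ∈ L :=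
      fun j => IntermediateField.subset_adjoin _ _ ⟨j, rfl⟩
    set cL : Fin (k + 1) → ↥L := fun j => ⟨φ (c j), hmemL j⟩ with hcLdef
    set q : Polynomial ↥L := ∑ j : Fin (k + 1), Polynomial.C (cL j) * Polynomial.X ^ (j : ℕ)
      with hqdef
    have hqcoeff : q.coeff (i : ℕ) = cL i := by
      rw [hqdef, Polynomial.finset_sum_coeff]
      rw [Finset.sum_eq_single i]
      · simp [Polynomial.coeff_C_mul, Polynomial.coeff_X_pow]
      · intro j _ hji
        have hij : (i : ℕ) ≠ (j : ℕ) := fun h => hji (Fin.val_injective h).symm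
        simp [Polynomial.coeff_C_mul, Polynomial.coeff_X_pow, hij]
      · intro h; exact absurd (Finset.mem_univ i) h
    have hcL0 : cL i ≠ 0 := fun h0 => hci (congrArg Subtype.val h0)
    have hq0 : q ≠ 0 := fun h => hcL0 (by rw [← hqcoeff, h, Polynomial.coeff_zero])
    have hqev : Polynomial.aeval (φ x) q = 0 := by
      rw [hqdef]
      simp only [map_sum, map_mul, Polynomial.aeval_C, map_pow, Polynomial.aeval_X]
      have hcoe : ∀ j : Fin (k + 1), algebraMap ↥L K (cL j) = φ (c j) := fun j => rfl
      simp only [hcoe]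
      exact hrelK
    have hxL : IsIntegral ↥L (φ x) := IsAlgebraic.isIntegral ⟨q, hq0, hqev⟩
    have hxk₀ : IsIntegral ↥k₀ (φ x) := isIntegral_trans _ hxL
    obtain ⟨P, hPm, hPe⟩ := hxk₀
    set m := P.natDegree with hmdef
    have hPsum : (∑ j ∈ Finset.range (m + 1), (P.coeff j : K) * φ x ^ j) = 0 := by
      have hPe' : Polynomial.aeval (φ x) P = 0 := hPe
      rw [Polynomial.aeval_eq_sum_range] at hPe'
      rw [← hPe']
      refine Finset.sum_congr rfl fun j _ => ?_
      rw [Algebra.smul_def]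
      rfl
    obtain ⟨s, hsS, hs0, hsden⟩ := exists_common_denominator S (m + 1)
      (fun j => (P.coeff j : K)) (fun j _ => (P.coeff j).2)
    have ha : ∀ j : Fin (m + 1), ∃ a : C, ψ a = s * (P.coeff (j : ℕ) : K) := by
      intro j
      obtain ⟨a, ha⟩ := hsden (j : ℕ) j.2
      exact ⟨a, ha⟩
    choose a haψ using ha
    set y : D := ∑ j : Fin (m + 1), algebraMap C D (a j) * x ^ (j : ℕ) with hydef
    have hyp : y ∈ p := by
      rw [← hφker, hydef, map_sum]
      simp only [map_mul, map_pow]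
      have hφψ : ∀ j : Fin (m + 1), φ (algebraMap C D (a j)) = ψ (a j) := fun j => rfl
      calc ∑ j : Fin (m + 1), φ (algebraMap C D (a j)) * φ x ^ (j : ℕ)
          = ∑ j : Fin (m + 1), s * ((P.coeff (j : ℕ) : K) * φ x ^ (j : ℕ)) := by
            refine Finset.sum_congr rfl fun j _ => ?_
            rw [hφψ j, haψ j, mul_assoc]
        _ = s * ∑ j : Fin (m + 1), (P.coeff (j : ℕ) : K) * φ x ^ (j : ℕ) := by
            rw [Finset.mul_sum]
        _ = 0 := by
            rw [Fin.sum_univ_eq_sum_range (fun j => (P.coeff j : K) * φ x ^ j), hPsum, mul_zero]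
    obtain ⟨w, hwp, hwy⟩ := exists_annihilator_of_mem_minimalPrime hp hyp
    have hann := hst w m a hwy
    have h1 := hann (Fin.last m)
    have h2 := congrArg φ h1
    rw [map_mul, map_zero] at h2
    have hφw : φ w ≠ 0 := fun h => hwp ((hφker w).mp h)
    have h3 : ψ (a (Fin.last m)) = 0 := by
      have : φ (algebraMap C D (a (Fin.last m))) = ψ (a (Fin.last m)) := rfl
      rw [this] at h2
      exact (mul_eq_zero.mp h2).resolve_left hφw
    have htop : ψ (a (Fin.last m)) = s := by
      rw [haψ, Fin.val_last, hPm.coeff_natDegree]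
      simp
    rw [htop] at h3
    exact hs0 h3
  have hmem : u * c i ∈ sInf (minimalPrimes D) := Submodule.mem_sInf.mpr fun J hJ => key J hJ
  have heq : sInf (minimalPrimes D) = (⊥ : Ideal D) := by
    rw [show minimalPrimes D = (⊥ : Ideal D).minimalPrimes from rfl, Ideal.sInf_minimalPrimes,
      show ((⊥ : Ideal D).radical) = nilradical D from rfl, nilradical_eq_zero, Submodule.zero_eq_bot]
  rw [heq] at hmem
  simpa using hmem
end
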